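/- arXiv:2012.14947 — 4 statements merged into one kernel-verified Lean document; each statement's English description precedes it below -/
import Mathlib

section
/- Fix k ≥ 2, 0 ≤ a ≤ k-1, and 1 ≤ r ≤ k-1. For all n ≥ 0 and 0 ≤ m ≤ n, the number of generalized (k,r)-Fine paths of depth a, semilength n, and semiheight m equals the number of (α,β)-colored order-(k-1) Motzkin paths of length n and height m, where α_i = C(k,i+1) - C(k-a-1,i+1) - C(k-r-1,i) and β_i = C(k,i+1) for 0 ≤ i ≤ k-2. -/
open Finset PowerSeries

/-- The validity condition for a single step `(s, c)` (vertical displacement `s`, color `c`)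
of an `(α,β)`-colored order-`ℓ` Motzkin path, where `h` is the height at which the step ends.
Up steps `s = 1` and maximal down steps `D_ℓ` are uncolored (color `0`); a down step
`D_d = (1,-d)` with `d < ℓ` gets one of `α d` colors if it ends at height `0` and one of
`β d` colors if it ends at positive height. -/
def MotzkinStepOK (ℓ : ℕ) (α β : ℕ → ℕ) (s : ℤ) (c : ℕ) (h : ℤ) : Prop :=
  (s = 1 ∧ c = 0) ∨
  ∃ d : ℕ, d ≤ ℓ ∧ s = -(d : ℤ) ∧
    (if d = ℓ then c = 0 else c < (if h = 0 then α d else β d))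

/-- The set of `(α,β)`-colored order-`ℓ` Motzkin paths of length `n` and height `m`,
encoded as lists of (displacement, color) pairs.  The path stays weakly above `y = 0`. -/
def ColoredMotzkinSet (ℓ : ℕ) (α β : ℕ → ℕ) (n m : ℕ) : Set (List (ℤ × ℕ)) :=
  {L | L.length = n ∧ (L.map Prod.fst).sum = (m : ℤ) ∧
    ∀ i < n, 0 ≤ ((L.take (i + 1)).map Prod.fst).sum ∧
      MotzkinStepOK ℓ α β (L.getD i (0, 0)).1 (L.getD i (0, 0)).2
        (((L.take (i + 1)).map Prod.fst).sum)}

/-- `M ℓ α β n m` is the number of `(α,β)`-colored order-`ℓ` Motzkin paths of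
length `n` and height `m`. -/
noncomputable def M (ℓ : ℕ) (α β : ℕ → ℕ) (n m : ℕ) : ℕ :=
  Nat.card (ColoredMotzkinSet ℓ α β n m)

/-- The set of generalized `k`-Dyck paths of depth `a`, semilength `n` and semiheight `m`:
lattice paths from `(0,0)` to `(k*n, k*m)` using steps `U = (1,1)` and `D_{k-1} = (1,1-k)`
that stay weakly above the line `y = -a`, encoded as lists of vertical displacements. -/
def DyckSet (k a n m : ℕ) : Set (List ℤ) :=
  {L | L.length = k * n ∧ L.sum = (k : ℤ) * m ∧
    (∀ s ∈ L, s = 1 ∨ s = 1 - (k : ℤ)) ∧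
    ∀ i, -(a : ℤ) ≤ (L.take i).sum}

/-- `D k a n m` is the number of generalized `k`-Dyck paths of depth `a`,
semilength `n` and semiheight `m`. -/
noncomputable def D (k a n m : ℕ) : ℕ := Nat.card (DyckSet k a n m)

/-- `HasHill k r L` holds when the path `L` contains a subpath `U^r D_{k-1}`
(`r` consecutive up steps followed by one maximal down step) ending at height `0`. -/
def HasHill (k r : ℕ) (L : List ℤ) : Prop :=
  ∃ i, i + r < L.length ∧ (∀ j < r, L.getD (i + j) 0 = 1) ∧
    L.getD (i + r) 0 = 1 - (k : ℤ) ∧ (L.take (i + r + 1)).sum = 0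

/-- `F k a r n m` is the number of generalized `(k,r)`-Fine paths of depth `a`,
semilength `n` and semiheight `m`: generalized `k`-Dyck paths with no subpath
`U^r D_{k-1}` ending at height `0`. -/
noncomputable def F (k a r n m : ℕ) : ℕ :=
  Nat.card {L | L ∈ DyckSet k a n m ∧ ¬ HasHill k r L}

/-!
Cut a Fine path into blocks of `k` steps. Each step changes the height by `1` or `1 - k`, so the
heights at block boundaries are multiples of `k`, and a hill `U^r D_{k-1}`, which ends at height
`0`, ends at a block boundary and lies inside the block it ends. A block with `j` down steps leads
from height `k (h + 1 - j)` to `k h`, just as a Motzkin step of displacement `1 - j` leads from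
`h + 1 - j` to `h`. For `h > 0` all `C(k, j)` such blocks are admissible. For `h = 0` the block must
not dip below `-a`, which happens exactly when its `j` down steps all lie among its first
`k - a - 1` steps, and must not end with `U^r D_{k-1}`; this leaves
`C(k, j) - C(k-a-1, j) - C(k-r-1, j-1)` blocks, i.e. `α_{j-1}`, or `1` when `j = k`, matching the
uncolored step `D_{k-1}`. Matching blocks with steps, induction on `n` identifies Fine paths ending
at height `k h` with colored Motzkin paths ending at height `h`.
-/

theorem List.take_append_getD {α : Type*} {L : List α} {n : ℕ} (hL : L.length = n + 1) (d : α) :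
    L.take n ++ [L.getD n d] = L := by
  rw [List.getD_eq_getElem _ _ (by omega), ← List.concat_eq_append, List.take_concat_get, ← hL,
    List.take_length]

theorem List.forall_sum_take_append_iff {M : Type*} [AddMonoid M] (p : M → Prop) (P B : List M) :
    (∀ i, p ((P ++ B).take i).sum) ↔ (∀ i, p (P.take i).sum) ∧ ∀ t, p (P.sum + (B.take t).sum) := by
  refine ⟨fun H => ⟨fun i => ?_, fun t => ?_⟩, fun ⟨HP, HB⟩ i => ?_⟩
  · rcases le_total i P.length with hi | hi
    · simpa [List.take_append_of_le_length hi] using H i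
    · simpa [List.take_of_length_le hi] using H P.length
  · simpa [List.take_length_add_append] using H (P.length + t)
  · rcases le_total i P.length with hi | hi
    · simpa [List.take_append_of_le_length hi] using HP i
    · obtain ⟨t, rfl⟩ := Nat.exists_eq_add_of_le hi
      simpa [List.take_length_add_append] using HB t

theorem nonempty_sigma_prod_equiv {ι : Type*} {A A' B B' : ι → Type*}
    (hA : ∀ i, Nonempty (A i ≃ A' i)) (hB : ∀ i, Nonempty (A i) → Nonempty (B i ≃ B' i)) :
    Nonempty ((Σ i, A i × B i) ≃ Σ i, A' i × B' i) := by
  classical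
  refine ⟨Equiv.sigmaCongrRight fun i => ?_⟩
  by_cases hi : Nonempty (A i)
  · exact (hA i).some.prodCongr (hB i hi).some
  · have : IsEmpty (A i) := not_nonempty_iff.mp hi
    have : IsEmpty (A' i) := (hA i).some.symm.isEmpty
    exact Equiv.equivOfIsEmpty _ _

theorem Finset.card_filter_not_and_not {α : Type*} (s : Finset α) (p q : α → Prop)
    [DecidablePred p] [DecidablePred q] (hpq : ∀ x ∈ s, p x → ¬ q x) :
    #(s.filter fun x => ¬ p x ∧ ¬ q x) = #s - #(s.filter p) - #(s.filter q) := by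
  classical
  have hsplit := card_filter_add_card_filter_not (s := s) fun x => p x ∨ q x
  rw [filter_or, card_union_of_disjoint (disjoint_filter.2 hpq)] at hsplit
  simp only [not_or] at hsplit
  omega

theorem Finset.filter_subset_powersetCard {α : Type*} [DecidableEq α] {s t : Finset α}
    (hst : s ⊆ t) (n : ℕ) :
    (t.powersetCard n).filter (· ⊆ s) = s.powersetCard n := by
  ext S
  simp only [mem_filter, mem_powersetCard]
  exact ⟨fun ⟨⟨_, hn⟩, hs⟩ => ⟨hs, hn⟩, fun ⟨hs, hn⟩ => ⟨⟨hs.trans hst, hn⟩, hs⟩⟩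

theorem HasHill.append {k r : ℕ} {L : List ℤ} (hL : HasHill k r L) (L' : List ℤ) :
    HasHill k r (L ++ L') := by
  obtain ⟨i, hi, hup, hdown, hsum⟩ := hL
  refine ⟨i, by simp; omega, fun t ht => ?_, ?_, ?_⟩
  · rw [List.getD_append _ _ _ _ (by omega)]; exact hup t ht
  · rw [List.getD_append _ _ _ _ (by omega)]; exact hdown
  · rwa [List.take_append_of_le_length (by omega)]

theorem MotzkinStepOK.fst_le_one {ℓ : ℕ} {α β : ℕ → ℕ} {s : ℤ} {c : ℕ} {h : ℤ}
    (hs : MotzkinStepOK ℓ α β s c h) : s ≤ 1 := by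
  rcases hs with ⟨rfl, -⟩ | ⟨d, -, rfl, -⟩ <;> omega

namespace FinePath

section Motzkin

variable (ℓ : ℕ) (α β : ℕ → ℕ)

/-- `ColoredMotzkinSet` with an integer end height. -/
def motzkinSet (n : ℕ) (y : ℤ) : Set (List (ℤ × ℕ)) :=
  {L | L.length = n ∧ (L.map Prod.fst).sum = y ∧
    ∀ i < n, 0 ≤ ((L.take (i + 1)).map Prod.fst).sum ∧
      MotzkinStepOK ℓ α β (L.getD i (0, 0)).1 (L.getD i (0, 0)).2
        (((L.take (i + 1)).map Prod.fst).sum)}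

def motzkinStep (j : ℕ) (h : ℤ) : Set (ℤ × ℕ) :=
  {x | x.1 = 1 - j ∧ 0 ≤ h ∧ MotzkinStepOK ℓ α β x.1 x.2 h}

def stepColors (j : ℕ) (h : ℤ) : ℕ :=
  if j = 0 ∨ j = ℓ + 1 then 1 else if j ≤ ℓ then (if h = 0 then α (j - 1) else β (j - 1)) else 0

variable {ℓ α β}

theorem motzkinStepOK_one_sub_iff {j c : ℕ} {h : ℤ} :
    MotzkinStepOK ℓ α β (1 - j) c h ↔ c < stepColors ℓ α β j h := by
  unfold MotzkinStepOK stepColors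
  rcases j with _ | j
  · simp only [Nat.cast_zero, sub_zero, true_and, true_or, if_true, Nat.lt_one_iff,
      or_iff_left_iff_imp]
    rintro ⟨d, -, hd, -⟩
    omega
  · have hfirst : (1 : ℤ) - (j + 1 : ℕ) ≠ 1 := by omega
    have hsecond : (∃ d ≤ ℓ, (1 : ℤ) - (j + 1 : ℕ) = -d ∧
        (if d = ℓ then c = 0 else c < if h = 0 then α d else β d)) ↔
        j ≤ ℓ ∧ (if j = ℓ then c = 0 else c < if h = 0 then α j else β j) := by
      constructor
      · rintro ⟨d, hd, hdj, hc⟩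
        obtain rfl : d = j := by omega
        exact ⟨hd, hc⟩
      · rintro ⟨hj, hc⟩
        exact ⟨j, hj, by push_cast; ring, hc⟩
    simp only [hfirst, false_and, false_or, hsecond, Nat.add_sub_cancel]
    rcases lt_trichotomy j ℓ with hj | rfl | hj
    · simp [hj.le, hj.ne, show j + 1 ≤ ℓ by omega]
    · simp
    · simp [hj.not_ge, hj.ne', show ¬ j + 1 ≤ ℓ by omega]

theorem mem_motzkinSet_zero {L : List (ℤ × ℕ)} {h : ℤ} :
    L ∈ motzkinSet ℓ α β 0 h ↔ L = [] ∧ h = 0 := by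
  simp only [motzkinSet, Set.mem_ofPred_eq, List.length_eq_zero_iff]
  constructor
  · rintro ⟨rfl, hsum, -⟩
    simpa using hsum.symm
  · rintro ⟨rfl, rfl⟩
    simp

theorem append_singleton_mem_motzkinSet_succ_iff {n : ℕ} {h : ℤ} {P : List (ℤ × ℕ)}
    {x : ℤ × ℕ} (hP : P.length = n) :
    P ++ [x] ∈ motzkinSet ℓ α β (n + 1) h ↔
      P ∈ motzkinSet ℓ α β n (h - x.1) ∧ 0 ≤ h ∧ MotzkinStepOK ℓ α β x.1 x.2 h := by
  have htake : ∀ i < n, (P ++ [x]).take (i + 1) = P.take (i + 1) := fun i hi =>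
    List.take_append_of_le_length (by omega)
  have hgetD : ∀ i < n, (P ++ [x]).getD i (0, 0) = P.getD i (0, 0) := fun i hi =>
    List.getD_append _ _ _ _ (by omega)
  have htake_last : (P ++ [x]).take (n + 1) = P ++ [x] := List.take_of_length_le (by simp [hP])
  have hgetD_last : (P ++ [x]).getD n (0, 0) = x := by simp [List.getD_eq_getElem?_getD, hP]
  have hsum : ((P ++ [x]).map Prod.fst).sum = (P.map Prod.fst).sum + x.1 := by simp
  simp only [motzkinSet, Set.mem_ofPred_eq, Nat.forall_lt_succ_right, htake_last, hgetD_last,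
    hsum]
  constructor
  · rintro ⟨-, hs, hpref, hlast⟩
    refine ⟨⟨hP, by linarith, fun i hi => ?_⟩, by rwa [hs] at hlast⟩
    rw [← htake i hi, ← hgetD i hi]
    exact hpref i hi
  · rintro ⟨⟨-, hs, hpref⟩, h0, hok⟩
    refine ⟨by simp [hP], by rw [hs]; ring, fun i hi => ?_, by rw [hs]; simpa using ⟨h0, hok⟩⟩
    rw [htake i hi, hgetD i hi]
    exact hpref i hi

theorem motzkinStep_eq_image {j : ℕ} {h : ℤ} (h0 : 0 ≤ h) :
    motzkinStep ℓ α β j h = ↑((range (stepColors ℓ α β j h)).image fun c => ((1 : ℤ) - j, c)) := by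
  ext ⟨s, c⟩
  simp only [motzkinStep, Set.mem_ofPred_eq, coe_image, Set.mem_image, mem_coe, mem_range,
    Prod.mk.injEq, h0, true_and]
  constructor
  · rintro ⟨rfl, hok⟩
    exact ⟨c, motzkinStepOK_one_sub_iff.1 hok, rfl, rfl⟩
  · rintro ⟨c, hc, rfl, rfl⟩
    exact ⟨rfl, motzkinStepOK_one_sub_iff.2 hc⟩

variable (ℓ α β)

def motzkinSetSuccEquiv (n : ℕ) (h : ℤ) :
    motzkinSet ℓ α β (n + 1) h ≃
      Σ j : ℕ, {Px : List (ℤ × ℕ) × (ℤ × ℕ) //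
        Px.1 ∈ motzkinSet ℓ α β n (h - 1 + j) ∧ Px.2 ∈ motzkinStep ℓ α β j h} where
  toFun L :=
    have hmem := (append_singleton_mem_motzkinSet_succ_iff (n := n) (P := L.1.take n)
      (x := L.1.getD n (0, 0)) (by simp [L.2.1])).1
      (by rw [List.take_append_getD L.2.1]; exact L.2)
    have hfst : (L.1.getD n (0, 0)).1 = 1 - ((1 - (L.1.getD n (0, 0)).1).toNat : ℤ) := by
      have := MotzkinStepOK.fst_le_one hmem.2.2; omega
    ⟨(1 - (L.1.getD n (0, 0)).1).toNat, ⟨(L.1.take n, L.1.getD n (0, 0)),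
      by convert hmem.1 using 2; omega, hfst, hmem.2⟩⟩
  invFun Px := ⟨Px.2.1.1 ++ [Px.2.1.2], (append_singleton_mem_motzkinSet_succ_iff Px.2.2.1.1).2
    ⟨by rw [Px.2.2.2.1]; convert Px.2.2.1 using 2; ring, Px.2.2.2.2⟩⟩
  left_inv L := Subtype.ext (List.take_append_getD L.2.1 _)
  right_inv := by
    rintro ⟨j, ⟨P, x⟩, hP, hx, -⟩
    dsimp only at hx
    refine Sigma.subtype_ext ?_ ?_
    · simp [hP.1, hx]
    · simp [hP.1]

end Motzkin

variable {k a r : ℕ}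

theorem nonneg_of_neg_le_mul {y : ℤ} (ha : a < k) (hy : -(a : ℤ) ≤ k * y) : 0 ≤ y := by
  by_contra! hneg
  have : (k : ℤ) * y ≤ -k := by nlinarith
  omega

theorem sum_eq_length_sub_mul_count {L : List ℤ} (hL : ∀ s ∈ L, s = 1 ∨ s = 1 - (k : ℤ)) :
    L.sum = L.length - k * L.count (1 - (k : ℤ)) := by
  induction L with
  | nil => simp
  | cons s L ih =>
    rw [List.forall_mem_cons] at hL
    rw [List.sum_cons, List.length_cons, List.count_cons, ih hL.2]
    simp only [beq_iff_eq]
    rcases hL.1 with rfl | rfl <;> split_ifs with hs <;> push_cast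
    · linear_combination hs
    · ring
    · ring
    · exact absurd rfl hs

theorem length_eq_mul_count_of_sum_eq_zero {L : List ℤ}
    (hL : ∀ s ∈ L, s = 1 ∨ s = 1 - (k : ℤ)) (hsum : L.sum = 0) :
    L.length = k * L.count (1 - (k : ℤ)) := by
  have := sum_eq_length_sub_mul_count hL
  zify
  omega

variable (k a r) in
/-- The paths counted by `F`, with an arbitrary integer end height. -/
def fineSet (n : ℕ) (y : ℤ) : Set (List ℤ) :=
  {L | L.length = k * n ∧ L.sum = y ∧ (∀ s ∈ L, s = 1 ∨ s = 1 - (k : ℤ)) ∧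
    (∀ i, -(a : ℤ) ≤ (L.take i).sum) ∧ ¬ HasHill k r L}

variable (k r) in
def EndsInHill (b : List ℤ) : Prop :=
  b.getD (k - 1) 0 = 1 - (k : ℤ) ∧ ∀ t < r, b.getD (k - 1 - r + t) 0 = 1

variable (k a r) in
/-- The admissible last blocks of `k` steps of a Fine path ending at height `k * h`, with `j` down
steps; such a block starts at height `k * (h - 1 + j)`. -/
def fineBlock (j : ℕ) (h : ℤ) : Set (List ℤ) :=
  {b | b.length = k ∧ (∀ s ∈ b, s = 1 ∨ s = 1 - (k : ℤ)) ∧ b.count (1 - (k : ℤ)) = j ∧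
    (∀ t, -(a : ℤ) ≤ k * (h - 1 + j) + (b.take t).sum) ∧ ¬ (h = 0 ∧ EndsInHill k r b)}

theorem hasHill_append_of_endsInHill {P B : List ℤ} (hB : B.length = k) (hr : r < k)
    (hsum : (P ++ B).sum = 0) (hend : EndsInHill k r B) : HasHill k r (P ++ B) := by
  have hgetD : ∀ i < k, (P ++ B).getD (P.length + i) 0 = B.getD i 0 := fun i _ => by
    rw [List.getD_append_right _ _ _ _ (by omega), Nat.add_sub_cancel_left]
  refine ⟨P.length + (k - 1 - r), by simp; omega, fun t ht => ?_, ?_, ?_⟩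
  · rw [add_assoc, hgetD _ (by omega)]; exact hend.2 t ht
  · rw [add_assoc, show k - 1 - r + r = k - 1 by omega, hgetD _ (by omega)]; exact hend.1
  · rwa [List.take_of_length_le (by simp; omega)]

/-- A hill ends at height `0`, hence after a multiple of `k` steps: it cannot straddle the
boundary between the prefix and the last block. -/
theorem hasHill_append_iff {n : ℕ} {P B : List ℤ} (hP : P.length = k * n) (hB : B.length = k)
    (hr : r < k) (hval : ∀ s ∈ P ++ B, s = 1 ∨ s = 1 - (k : ℤ)) :
    HasHill k r (P ++ B) ↔ HasHill k r P ∨ ((P ++ B).sum = 0 ∧ EndsInHill k r B) := by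
  refine ⟨fun ⟨i, hi, hup, hdown, hsum⟩ => ?_, ?_⟩
  · obtain ⟨c, hc⟩ : ∃ c, i + r + 1 = k * c := by
      have := length_eq_mul_count_of_sum_eq_zero
        (fun s hs => hval s (List.mem_of_mem_take hs)) hsum
      rw [List.length_take, min_eq_left (by omega)] at this
      exact ⟨_, this⟩
    rcases le_or_gt (i + r + 1) (k * n) with hle | hgt
    · refine .inl ⟨i, by omega, fun t ht => ?_, ?_, ?_⟩
      · rw [← List.getD_append P B 0 _ (by omega)]; exact hup t ht
      · rw [← List.getD_append P B 0 _ (by omega)]; exact hdown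
      · rwa [← List.take_append_of_le_length (by omega)]
    · have hcn : c = n + 1 := by
        have h1 : n < c := Nat.lt_of_mul_lt_mul_left (by omega : k * n < k * c)
        have h2 : c < n + 2 := Nat.lt_of_mul_lt_mul_left (by simp at hi; lia : k * c < k * (n + 2))
        omega
      subst hcn
      have hi : i = P.length + (k - 1 - r) := by rw [Nat.mul_succ] at hc; omega
      have hgetD : ∀ t < k, B.getD t 0 = (P ++ B).getD (P.length + t) 0 := fun t _ => by
        rw [List.getD_append_right _ _ _ _ (by omega), Nat.add_sub_cancel_left]
      refine .inr ⟨by rwa [List.take_of_length_le (by simp; lia)] at hsum, ?_, fun t ht => ?_⟩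
      · rw [hgetD _ (by omega), show P.length + (k - 1) = i + r by omega]; exact hdown
      · rw [hgetD _ (by omega), show P.length + (k - 1 - r + t) = i + t by omega]; exact hup t ht
  · rintro (hP | ⟨hsum, hend⟩)
    · exact HasHill.append hP B
    · exact hasHill_append_of_endsInHill hB hr hsum hend

theorem append_mem_fineSet_succ_iff {n j : ℕ} {h : ℤ} {P B : List ℤ} (hk : 0 < k) (hr : r < k)
    (hP : P.length = k * n) (hB : B.length = k) (hj : B.count (1 - (k : ℤ)) = j) :
    P ++ B ∈ fineSet k a r (n + 1) (k * h) ↔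
      P ∈ fineSet k a r n (k * (h - 1 + j)) ∧ B ∈ fineBlock k a r j h := by
  have hBsum : (∀ s ∈ B, s = 1 ∨ s = 1 - (k : ℤ)) → B.sum = k - k * j := fun hBval => by
    rw [sum_eq_length_sub_mul_count hBval, hB, hj]
  constructor
  · rintro ⟨-, hsum, hval, hdepth, hhill⟩
    have hPsum : P.sum = k * (h - 1 + j) := by
      rw [List.sum_append, hBsum (List.forall_mem_append.1 hval).2] at hsum; linarith
    rw [List.forall_sum_take_append_iff, hPsum] at hdepth
    rw [hasHill_append_iff hP hB hr hval, not_or] at hhill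
    rw [List.forall_mem_append] at hval
    refine ⟨⟨hP, hPsum, hval.1, hdepth.1, hhill.1⟩, hB, hval.2, hj, hdepth.2, ?_⟩
    rintro ⟨rfl, hend⟩
    exact hhill.2 ⟨by simp [hsum], hend⟩
  · rintro ⟨⟨-, hPsum, hPval, hPdepth, hPhill⟩, -, hBval, -, hBdepth, hBhill⟩
    have hsum : (P ++ B).sum = k * h := by rw [List.sum_append, hPsum, hBsum hBval]; ring
    have hval := List.forall_mem_append.2 ⟨hPval, hBval⟩
    refine ⟨by simp [hP, hB]; ring, hsum, hval,
      (List.forall_sum_take_append_iff _ _ _).2 ⟨hPdepth, by rwa [hPsum]⟩, ?_⟩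
    rw [hasHill_append_iff hP hB hr hval]
    rintro (hh | ⟨h0, hend⟩)
    · exact hPhill hh
    · exact hBhill ⟨by simpa [hsum, hk.ne'] using h0, hend⟩

theorem nonneg_of_mem_fineSet (ha : a < k) {n : ℕ} {y : ℤ} {L : List ℤ}
    (hL : L ∈ fineSet k a r n (k * y)) : 0 ≤ y := by
  have := hL.2.2.2.1 L.length
  rw [List.take_length, hL.2.1] at this
  exact nonneg_of_neg_le_mul ha this

theorem fineSet_zero (hk : 0 < k) (h : ℤ) :
    fineSet k a r 0 (k * h) = {L | L = [] ∧ h = 0} := by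
  ext L
  simp only [fineSet, Set.mem_ofPred_eq, mul_zero, List.length_eq_zero_iff]
  constructor
  · rintro ⟨rfl, hsum, -⟩
    simpa [hk.ne'] using hsum.symm
  · rintro ⟨rfl, rfl⟩
    exact ⟨rfl, by simp, by simp, by simp, fun ⟨i, hi, _⟩ => by simp at hi⟩

variable (a) in
def fineSetSuccEquiv (hk : 0 < k) (hr : r < k) (n : ℕ) (h : ℤ) :
    fineSet k a r (n + 1) (k * h) ≃
      Σ j : ℕ, {PB : List ℤ × List ℤ //
        PB.1 ∈ fineSet k a r n (k * (h - 1 + j)) ∧ PB.2 ∈ fineBlock k a r j h} where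
  toFun L :=
    have hlen : (L : List ℤ).length = k * (n + 1) := L.2.1
    ⟨_, ⟨(L.1.take (k * n), L.1.drop (k * n)),
      (append_mem_fineSet_succ_iff hk hr (by simp [hlen, Nat.mul_succ])
        (by simp [hlen, Nat.mul_succ]) rfl).1 (by rw [List.take_append_drop]; exact L.2)⟩⟩
  invFun PB := ⟨PB.2.1.1 ++ PB.2.1.2,
    (append_mem_fineSet_succ_iff hk hr PB.2.2.1.1 PB.2.2.2.1 PB.2.2.2.2.2.1).2 PB.2.2⟩
  left_inv L := Subtype.ext (List.take_append_drop _ _)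
  right_inv := by
    rintro ⟨j, ⟨P, B⟩, hP, hB⟩
    refine Sigma.subtype_ext ?_ ?_
    · simp [List.drop_left' hP.1, hB.2.2.1]
    · simp [List.take_left' hP.1, List.drop_left' hP.1]

variable (k) in
def blockWord (S : Finset ℕ) : List ℤ :=
  (List.range k).map fun i => if i ∈ S then 1 - (k : ℤ) else 1

variable (k) in
def downSet (b : List ℤ) : Finset ℕ :=
  (range k).filter fun i => b.getD i 0 = 1 - (k : ℤ)

variable (k a r) in
/-- The down-step sets of the admissible last blocks: a block ending at height `0` must not dip
below `-a`, i.e. must not have all its down steps among its first `k - a - 1` steps, and must not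
end with `U^r D_{k-1}`. -/
def admissibleDownSets (j : ℕ) (h : ℤ) : Finset (Finset ℕ) :=
  (powersetCard j (range k)).filter fun S =>
    h = 0 → ¬ S ⊆ range (k - a - 1) ∧ ¬ (k - 1 ∈ S ∧ S ⊆ insert (k - 1) (range (k - 1 - r)))

variable (k a r) in
def blockCount (j : ℕ) (h : ℤ) : ℕ :=
  if h = 0 then k.choose j - (k - a - 1).choose j - (k - r - 1).choose (j - 1) else k.choose j

variable (k a r) in
def fineAlpha (i : ℕ) : ℕ := k.choose (i + 1) - (k - a - 1).choose (i + 1) - (k - r - 1).choose i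

variable (k) in
def fineBeta (i : ℕ) : ℕ := k.choose (i + 1)

theorem length_blockWord (S : Finset ℕ) : (blockWord k S).length = k := by
  simp [blockWord]

theorem getD_blockWord (S : Finset ℕ) {i : ℕ} (hi : i < k) :
    (blockWord k S).getD i 0 = if i ∈ S then 1 - (k : ℤ) else 1 := by
  simp [blockWord, List.getD_eq_getElem?_getD, hi]

theorem blockWord_step {S : Finset ℕ} {s : ℤ} (hs : s ∈ blockWord k S) :
    s = 1 ∨ s = 1 - (k : ℤ) := by
  simp only [blockWord, List.mem_map] at hs
  obtain ⟨i, -, rfl⟩ := hs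
  split_ifs <;> simp

theorem sum_take_blockWord {S : Finset ℕ} (hS : S ⊆ range k) (t : ℕ) :
    ((blockWord k S).take t).sum = (min t k : ℕ) - k * #(S ∩ range t) := by
  have hS' : S ∩ range t = S ∩ range (min t k) := by
    ext i
    have := fun hi : i ∈ S => mem_range.1 (hS hi)
    simp only [mem_inter, mem_range]
    grind
  rw [blockWord, ← List.map_take, List.take_range, hS']
  generalize min t k = t
  have hsplit := card_filter_add_card_filter_not (s := range t) (· ∈ S)
  rw [filter_mem_eq_inter, inter_comm, card_range] at hsplit
  rw [← Multiset.sum_coe, ← Multiset.map_coe, ← Multiset.range, ← Finset.range_val,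
    ← Finset.sum_eq_multiset_sum, Finset.sum_ite, Finset.sum_const, Finset.sum_const,
    filter_mem_eq_inter, inter_comm, nsmul_eq_mul, nsmul_eq_mul]
  have hsplit' : (#(S ∩ range t) : ℤ) + #{i ∈ range t | i ∉ S} = t := by exact_mod_cast hsplit
  linear_combination hsplit'

theorem count_blockWord (hk : k ≠ 0) {S : Finset ℕ} (hS : S ⊆ range k) :
    (blockWord k S).count (1 - (k : ℤ)) = #S := by
  have hsum := sum_eq_length_sub_mul_count (k := k) fun s hs => blockWord_step (S := S) hs
  have hsum' := sum_take_blockWord hS k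
  rw [List.take_of_length_le (length_blockWord S).le, min_self, inter_eq_left.2 hS] at hsum'
  rw [length_blockWord] at hsum
  have := mul_left_cancel₀ (Int.natCast_ne_zero.2 hk) (by linarith :
    (k : ℤ) * #S = k * (blockWord k S).count (1 - (k : ℤ)))
  exact_mod_cast this.symm

theorem downSet_subset (b : List ℤ) : downSet k b ⊆ range k :=
  filter_subset _ _

theorem blockWord_downSet {b : List ℤ} (hb : b.length = k)
    (hval : ∀ s ∈ b, s = 1 ∨ s = 1 - (k : ℤ)) : blockWord k (downSet k b) = b := by
  refine List.ext_getElem (by rw [length_blockWord, hb]) fun i hi hib => ?_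
  rw [length_blockWord] at hi
  simp only [blockWord, downSet, List.getElem_map, List.getElem_range, mem_filter, mem_range, hi,
    true_and, List.getD_eq_getElem _ _ hib]
  rcases hval _ (List.getElem_mem hib) with h1 | h1 <;> simp [h1]
  omega

theorem downSet_blockWord (hk : k ≠ 0) {S : Finset ℕ} (hS : S ⊆ range k) :
    downSet k (blockWord k S) = S := by
  ext i
  simp only [downSet, mem_filter, mem_range]
  constructor
  · rintro ⟨hi, hdown⟩
    rw [getD_blockWord S hi] at hdown
    by_contra hiS
    simp only [hiS, if_false] at hdown
    exact hk (by omega)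
  · intro hiS
    have hi := mem_range.1 (hS hiS)
    exact ⟨hi, by rw [getD_blockWord S hi, if_pos hiS]⟩

theorem blockWord_injOn (hk : k ≠ 0) : Set.InjOn (blockWord k) {S | S ⊆ range k} :=
  Set.LeftInvOn.injOn fun _ hS => downSet_blockWord hk hS

theorem blockWord_depth_iff (ha : a < k) {S : Finset ℕ} (hS : S ⊆ range k) {j : ℕ}
    (hcard : #S = j) {h : ℤ} (h0 : 0 ≤ h) (hj : 1 ≤ h + j) :
    (∀ t, -(a : ℤ) ≤ k * (h - 1 + j) + ((blockWord k S).take t).sum) ↔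
      (h = 0 → ¬ S ⊆ range (k - a - 1)) := by
  simp only [sum_take_blockWord hS]
  constructor
  · rintro H rfl hsub
    have := H (k - a - 1)
    rw [inter_eq_left.2 hsub, hcard, min_eq_left (by omega)] at this
    have e : (k : ℤ) * (0 - 1 + j) - k * j = -k := by ring
    omega
  · intro H t
    have hc : #(S ∩ range t) ≤ j := hcard ▸ card_le_card inter_subset_left
    rcases le_or_gt (#(S ∩ range t) : ℤ) (h - 1 + j) with hle | hgt
    · -- the height stays at least `k * (h - 1 + j - #(S ∩ range t)) ≥ 0`
      have : 0 ≤ (k : ℤ) * (h - 1 + j - #(S ∩ range t)) := by positivity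
      nlinarith
    · -- otherwise `h = 0` and all `j` down steps are among the first `t` steps
      obtain rfl : h = 0 := by omega
      have hsub : S ⊆ range t := by
        rw [← inter_eq_left]
        exact eq_of_subset_of_card_le inter_subset_left (by omega)
      have ht : k - a ≤ t := by
        by_contra! ht
        exact H rfl (hsub.trans (range_subset_range.2 (by omega)))
      rw [inter_eq_left.2 hsub, hcard]
      have e : (k : ℤ) * (0 - 1 + j) - k * j = -k := by ring
      omega

theorem endsInHill_blockWord (hr : r < k) {S : Finset ℕ} (hS : S ⊆ range k) :
    EndsInHill k r (blockWord k S) ↔ k - 1 ∈ S ∧ S ⊆ insert (k - 1) (range (k - 1 - r)) := by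
  have hup : ∀ i, (if i ∈ S then 1 - (k : ℤ) else 1) = 1 ↔ i ∉ S := fun i => by
    split_ifs with hi <;> simp [hi]; omega
  unfold EndsInHill
  rw [getD_blockWord S (by omega)]
  refine and_congr (by split_ifs with hi <;> simp [hi]; omega) ⟨fun H x hx => ?_, fun H t ht => ?_⟩
  · have := mem_range.1 (hS hx)
    rw [mem_insert, mem_range]
    by_contra! hx'
    have := H (x - (k - 1 - r)) (by omega)
    rw [show k - 1 - r + (x - (k - 1 - r)) = x by omega, getD_blockWord S (by omega), hup] at this
    exact this hx
  · rw [getD_blockWord S (by omega), hup]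
    intro hmem
    have := H hmem
    rw [mem_insert, mem_range] at this
    omega

theorem nonneg_of_mem_fineBlock (ha : a < k) {j : ℕ} {h : ℤ} {b : List ℤ}
    (hb : b ∈ fineBlock k a r j h) : 0 ≤ h := by
  obtain ⟨hlen, hval, hcount, hdepth, -⟩ := hb
  have := hdepth k
  rw [List.take_of_length_le hlen.le, sum_eq_length_sub_mul_count hval, hlen, hcount] at this
  exact nonneg_of_neg_le_mul ha (by linarith)

theorem blockWord_mem_fineBlock_iff (ha : a < k) (hr : r < k) {S : Finset ℕ} (hS : S ⊆ range k)
    {j : ℕ} {h : ℤ} (h0 : 0 ≤ h) (hj : 1 ≤ h + j) :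
    blockWord k S ∈ fineBlock k a r j h ↔ S ∈ admissibleDownSets k a r j h := by
  have hk : k ≠ 0 := by omega
  by_cases hcard : #S = j
  · simp only [fineBlock, admissibleDownSets, Set.mem_ofPred_eq, mem_filter, mem_powersetCard,
      length_blockWord, count_blockWord hk hS, hcard, blockWord_depth_iff ha hS hcard h0 hj,
      endsInHill_blockWord hr hS, hS]
    have := fun s => @blockWord_step k S s
    tauto
  · simp [fineBlock, admissibleDownSets, count_blockWord hk hS, hcard]

theorem subset_range_of_mem_admissibleDownSets {j : ℕ} {h : ℤ} {S : Finset ℕ}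
    (hS : S ∈ admissibleDownSets k a r j h) : S ⊆ range k :=
  (mem_powersetCard.1 (mem_filter.1 hS).1).1

theorem fineBlock_eq_image (ha : a < k) (hr : r < k) {j : ℕ} {h : ℤ} (h0 : 0 ≤ h)
    (hj : 1 ≤ h + j) :
    fineBlock k a r j h = ↑((admissibleDownSets k a r j h).image (blockWord k)) := by
  ext b
  rw [coe_image, Set.mem_image]
  constructor
  · intro hb
    have hword := blockWord_downSet hb.1 hb.2.1
    refine ⟨downSet k b, ?_, hword⟩
    rw [mem_coe, ← blockWord_mem_fineBlock_iff ha hr (downSet_subset b) h0 hj, hword]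
    exact hb
  · rintro ⟨S, hS, rfl⟩
    exact (blockWord_mem_fineBlock_iff ha hr
      (subset_range_of_mem_admissibleDownSets hS) h0 hj).2 hS

theorem card_hillDownSets (hr : r < k) {j : ℕ} (hj : 1 ≤ j) :
    #((powersetCard j (range k)).filter fun S =>
      k - 1 ∈ S ∧ S ⊆ insert (k - 1) (range (k - 1 - r))) = (k - r - 1).choose (j - 1) := by
  have hT : insert (k - 1) (range (k - 1 - r)) ⊆ range k := by
    intro x hx
    rw [mem_insert, mem_range] at hx
    rw [mem_range]
    omega
  have : ((powersetCard j (range k)).filter fun S =>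
      k - 1 ∈ S ∧ S ⊆ insert (k - 1) (range (k - 1 - r))) =
      (powersetCard j (insert (k - 1) (range (k - 1 - r)))).filter ({k - 1} ⊆ ·) := by
    ext S
    simp only [mem_filter, mem_powersetCard, singleton_subset_iff]
    exact ⟨fun ⟨⟨_, hc⟩, hmem, hsub⟩ => ⟨⟨hsub, hc⟩, hmem⟩,
      fun ⟨⟨hsub, hc⟩, hmem⟩ => ⟨⟨hsub.trans hT, hc⟩, hmem, hsub⟩⟩
  rw [this, card_filter_powersetCard_subset _ _ _ (by simp) (by simpa using hj),
    card_insert_of_notMem (by simp), card_range, card_singleton]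
  congr 1
  omega

theorem card_admissibleDownSets (hr : r < k) {j : ℕ} {h : ℤ} (hj : h = 0 → 1 ≤ j) :
    #(admissibleDownSets k a r j h) = blockCount k a r j h := by
  unfold admissibleDownSets blockCount
  split_ifs with h0
  · simp only [h0, forall_const]
    rw [card_filter_not_and_not, card_powersetCard, card_range,
      filter_subset_powersetCard (range_subset_range.2 (by omega)), card_powersetCard, card_range,
      card_hillDownSets hr (hj h0)]
    intro S _ hsub hmem
    have := mem_range.1 (hsub hmem.1)
    omega
  · simp [h0]

theorem stepColors_eq_blockCount (hr1 : 1 ≤ r) (hr : r < k) {j : ℕ} {h : ℤ} (hj : h = 0 → 1 ≤ j) :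
    stepColors (k - 1) (fineAlpha k a r) (fineBeta k) j h = blockCount k a r j h := by
  unfold stepColors blockCount fineAlpha fineBeta
  rcases Nat.eq_zero_or_pos j with rfl | hj0
  · rw [if_pos (Or.inl rfl), if_neg fun h0 => by simpa using hj h0, Nat.choose_zero_right]
  rcases Nat.lt_trichotomy j k with hjk | rfl | hkj
  · rw [if_neg (by omega), if_pos (by omega), Nat.sub_add_cancel hj0]
  · rw [if_pos (Or.inr (by omega)), Nat.choose_self,
      Nat.choose_eq_zero_of_lt (show j - a - 1 < j by omega),
      Nat.choose_eq_zero_of_lt (show j - r - 1 < j - 1 by omega), ite_self]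
  · rw [if_neg (by omega), if_neg (by omega), Nat.choose_eq_zero_of_lt hkj, Nat.zero_sub,
      Nat.zero_sub, ite_self]

theorem nonempty_fineBlock_equiv_motzkinStep (ha : a < k) (hr1 : 1 ≤ r) (hr : r < k) {j : ℕ}
    {h : ℤ} (hj : 0 ≤ h - 1 + j) :
    Nonempty (fineBlock k a r j h ≃ motzkinStep (k - 1) (fineAlpha k a r) (fineBeta k) j h) := by
  rcases lt_or_ge h 0 with hneg | h0
  · have : IsEmpty (fineBlock k a r j h) := ⟨fun b => (nonneg_of_mem_fineBlock ha b.2).not_gt hneg⟩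
    have : IsEmpty (motzkinStep (k - 1) (fineAlpha k a r) (fineBeta k) j h) :=
      ⟨fun x => x.2.2.1.not_gt hneg⟩
    exact ⟨Equiv.equivOfIsEmpty _ _⟩
  · have hj' : h = 0 → 1 ≤ j := by omega
    rw [fineBlock_eq_image ha hr h0 (by omega), motzkinStep_eq_image h0, coe_sort_coe, coe_sort_coe]
    refine ⟨equivOfCardEq ?_⟩
    rw [card_image_of_injOn ((blockWord_injOn (by omega)).mono fun S hS =>
        subset_range_of_mem_admissibleDownSets hS),
      card_image_of_injective _ (Prod.mk_right_injective _), card_range,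
      card_admissibleDownSets hr hj', stepColors_eq_blockCount hr1 hr hj']

theorem nonempty_fineSet_equiv_motzkinSet (ha : a < k) (hr1 : 1 ≤ r) (hr : r < k) (n : ℕ)
    (h : ℤ) :
    Nonempty (fineSet k a r n (k * h) ≃ motzkinSet (k - 1) (fineAlpha k a r) (fineBeta k) n h) := by
  have hk : 0 < k := by omega
  induction n generalizing h with
  | zero =>
    rw [fineSet_zero hk, show motzkinSet (k - 1) (fineAlpha k a r) (fineBeta k) 0 h =
      {L | L = [] ∧ h = 0} from Set.ext fun _ => mem_motzkinSet_zero]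
    exact ⟨{ toFun := fun L => ⟨[], rfl, L.2.2⟩
             invFun := fun L => ⟨[], rfl, L.2.2⟩
             left_inv := fun L => Subtype.ext L.2.1.symm
             right_inv := fun L => Subtype.ext L.2.1.symm }⟩
  | succ n ih =>
    obtain ⟨e⟩ := nonempty_sigma_prod_equiv (fun j : ℕ => ih (h - 1 + j)) fun _ ⟨P⟩ =>
      nonempty_fineBlock_equiv_motzkinStep ha hr1 hr (nonneg_of_mem_fineSet ha P.2)
    exact ⟨(fineSetSuccEquiv a hk hr n h).trans <|
      (Equiv.sigmaCongrRight fun _ => Equiv.subtypeProdEquivProd).trans <| e.trans <|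
      ((motzkinSetSuccEquiv _ _ _ n h).trans
        (Equiv.sigmaCongrRight fun _ => Equiv.subtypeProdEquivProd)).symm⟩

end FinePath

theorem fine_eq_colored_motzkin_general (k a r : ℕ) (hk : 2 ≤ k) (ha : a ≤ k - 1)
    (hr1 : 1 ≤ r) (hr2 : r ≤ k - 1) (n m : ℕ) :
    F k a r n m =
      M (k - 1)
        (fun i => k.choose (i + 1) - (k - a - 1).choose (i + 1) - (k - r - 1).choose i)
        (fun i => k.choose (i + 1)) n m := by
  have hak : a < k := by omega
  have hrk : r < k := by omega
  have hfine : {L | L ∈ DyckSet k a n m ∧ ¬ HasHill k r L} = FinePath.fineSet k a r n (k * m) := by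
    ext L
    simp only [DyckSet, FinePath.fineSet, Set.mem_ofPred_eq, and_assoc]
  obtain ⟨e⟩ := FinePath.nonempty_fineSet_equiv_motzkinSet hak hr1 hrk n m
  rw [F, hfine]
  exact Nat.card_congr e

/-- Generalized `(k,r)`-Fine paths of depth `a` are equinumerous with suitably colored
order-`(k-1)` Motzkin paths. -/
theorem fine_eq_colored_motzkin (k a r : ℕ) (hk : 2 ≤ k) (ha : a ≤ k - 1)
    (hr1 : 1 ≤ r) (hr2 : r ≤ k - 1) (n m : ℕ) (hm : m ≤ n) :
    F k a r n m =
      M (k - 1)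
        (fun i => k.choose (i + 1) - (k - a - 1).choose (i + 1) - (k - r - 1).choose i)
        (fun i => k.choose (i + 1)) n m :=
  fine_eq_colored_motzkin_general k a r hk ha hr1 hr2 n m
end

section
/- Fix k ≥ 2 and 1 ≤ r ≤ k-1. The generating function F_{k,r}(t) = Σ_n F^{k,0,r}_{n,0} t^n of the (k,r)-Fine numbers satisfies F_{k,r}(t) = C_k(t)/(1 + t·C_k(t)^{k-r}), where C_k(t) is the unique power series with constant term 1 satisfying C_k(t) = 1 + t·C_k(t)^k. -/
open Finset PowerSeries

/-!
Weight nonnegative paths by their number of down steps and let `E m` and `G m` be the generating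
functions of the paths from height `0` to height `m` and of those among them without a hill.
Cutting a path to `m + 1` at its last visit to `0` gives `E (m + 1) = E 0 * E m`; hills end at
height `0`, so they all lie in the first piece and `G (m + 1) = G 0 * E m`. Hence
`E m = E 0 ^ (m + 1)` and `G m = G 0 * E 0 ^ m`. Cutting a nonempty path to `0` after its first
step and at its first return to `0` gives `E 0 = 1 + t * E (k - 2) * E 0 = 1 + t * E 0 ^ k`, whose
only solution is `C_k`. Cutting a path to `0` with a hill around its first hill gives
`E 0 = G 0 + t * G (k - 1 - r) * E 0 = G 0 * (1 + t * E 0 ^ (k - r))`.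
-/

section WeightedGF

variable {α β γ : Type*}

noncomputable def gf (w : α → ℕ) (S : Set α) : PowerSeries ℚ :=
  mk fun n => ({x ∈ S | w x = n} : Set α).ncard

def FiniteFibers (w : α → ℕ) (S : Set α) : Prop := ∀ n, ({x ∈ S | w x = n} : Set α).Finite

lemma FiniteFibers.subset {w : α → ℕ} {S T : Set α} (hT : FiniteFibers w T) (h : S ⊆ T) :
    FiniteFibers w S :=
  fun n => (hT n).subset fun _ hx => ⟨h hx.1, hx.2⟩

lemma coeff_gf (w : α → ℕ) (S : Set α) (n : ℕ) :
    coeff n (gf w S) = ({x ∈ S | w x = n} : Set α).ncard :=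
  coeff_mk n _

lemma gf_singleton (w : α → ℕ) (x : α) : gf w {x} = X ^ w x := by
  ext n
  rw [coeff_gf, coeff_X_pow]
  by_cases h : w x = n
  · simp [h, Set.ofPred_and]
  · simp [h, Ne.symm h, Set.ofPred_and]

lemma gf_union {w : α → ℕ} {S T : Set α} (hST : Disjoint S T) (hS : FiniteFibers w S)
    (hT : FiniteFibers w T) : gf w (S ∪ T) = gf w S + gf w T := by
  ext n
  have hsep : ({x ∈ S ∪ T | w x = n} : Set α) = {x ∈ S | w x = n} ∪ {x ∈ T | w x = n} :=
    Set.sep_union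
  rw [map_add, coeff_gf, coeff_gf, coeff_gf, hsep, Set.ncard_union_eq
    (hST.mono (Set.sep_subset _ _) (Set.sep_subset _ _)) (hS n) (hT n)]
  push_cast; rfl

lemma gf_sep_add_gf_sep_not {w : α → ℕ} {S : Set α} (hS : FiniteFibers w S) (p : α → Prop) :
    gf w {x ∈ S | p x} + gf w {x ∈ S | ¬ p x} = gf w S := by
  have hdisj : Disjoint {x ∈ S | p x} {x ∈ S | ¬ p x} :=
    Set.disjoint_left.2 fun _ hx hx' => hx'.2 hx.2
  rw [← gf_union hdisj (hS.subset (Set.sep_subset _ _)) (hS.subset (Set.sep_subset _ _))]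
  congr 1
  ext x
  simp only [Set.mem_union, Set.mem_ofPred_eq]
  tauto

lemma ncard_prod_sep_add_eq_sum_antidiagonal {w₁ : α → ℕ} {w₂ : β → ℕ} {S₁ : Set α} {S₂ : Set β}
    (hS₁ : FiniteFibers w₁ S₁) (hS₂ : FiniteFibers w₂ S₂) (m : ℕ) :
    ({p ∈ S₁ ×ˢ S₂ | w₁ p.1 + w₂ p.2 = m} : Set (α × β)).ncard =
      ∑ q ∈ antidiagonal m,
        ({x ∈ S₁ | w₁ x = q.1} : Set α).ncard * ({y ∈ S₂ | w₂ y = q.2} : Set β).ncard := by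
  classical
  have hset : ({p ∈ S₁ ×ˢ S₂ | w₁ p.1 + w₂ p.2 = m} : Set (α × β)) =
      ↑((antidiagonal m).biUnion fun q => (hS₁ q.1).toFinset ×ˢ (hS₂ q.2).toFinset) := by
    ext ⟨x, y⟩
    simp only [Set.mem_ofPred_eq, Set.mem_prod, coe_biUnion, mem_coe,
      HasAntidiagonal.mem_antidiagonal, Set.mem_iUnion, coe_product, Set.Finite.coe_toFinset,
      exists_prop, Prod.exists]
    constructor
    · rintro ⟨⟨hx, hy⟩, rfl⟩
      exact ⟨_, _, rfl, ⟨hx, rfl⟩, ⟨hy, rfl⟩⟩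
    · rintro ⟨a, b, rfl, ⟨hx, rfl⟩, ⟨hy, rfl⟩⟩
      exact ⟨⟨hx, hy⟩, rfl⟩
  rw [hset, Set.ncard_coe_finset, card_biUnion]
  · refine sum_congr rfl fun q _ => ?_
    rw [card_product, Set.ncard_eq_toFinset_card _ (hS₁ _), Set.ncard_eq_toFinset_card _ (hS₂ _)]
  · intro q _ q' _ hne
    rw [Function.onFun, Finset.disjoint_left]
    rintro ⟨x, y⟩ hxy hxy'
    simp only [mem_product, Set.Finite.mem_toFinset] at hxy hxy'
    exact hne (Prod.ext (hxy.1.2 ▸ hxy'.1.2) (hxy.2.2 ▸ hxy'.2.2))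

lemma gf_eq_of_bijOn {w₁ : α → ℕ} {w₂ : β → ℕ} {w : γ → ℕ} {S₁ : Set α} {S₂ : Set β}
    {S : Set γ} {Φ : α × β → γ} (hΦ : Set.BijOn Φ (S₁ ×ˢ S₂) S) (c : ℕ)
    (hw : ∀ p ∈ S₁ ×ˢ S₂, w (Φ p) = w₁ p.1 + w₂ p.2 + c)
    (hS₁ : FiniteFibers w₁ S₁) (hS₂ : FiniteFibers w₂ S₂) :
    gf w S = X ^ c * (gf w₁ S₁ * gf w₂ S₂) := by
  ext n
  have hfib : ({z ∈ S | w z = n} : Set γ) =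
      Φ '' {p ∈ S₁ ×ˢ S₂ | w₁ p.1 + w₂ p.2 + c = n} := by
    rw [← hΦ.image_eq]
    ext z
    constructor
    · rintro ⟨⟨p, hp, rfl⟩, hz⟩
      exact ⟨p, ⟨hp, hw p hp ▸ hz⟩, rfl⟩
    · rintro ⟨p, ⟨hp, hpn⟩, rfl⟩
      exact ⟨⟨p, hp, rfl⟩, hw p hp ▸ hpn⟩
  rw [coeff_gf, coeff_X_pow_mul', hfib, (hΦ.injOn.mono (Set.sep_subset _ _)).ncard_image]
  split_ifs with hc
  · have hsep : ({p ∈ S₁ ×ˢ S₂ | w₁ p.1 + w₂ p.2 + c = n} : Set (α × β)) =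
        {p ∈ S₁ ×ˢ S₂ | w₁ p.1 + w₂ p.2 = n - c} := by
      ext p
      exact and_congr_right fun _ => ⟨fun h => by omega, fun h => by omega⟩
    rw [coeff_mul, hsep, ncard_prod_sep_add_eq_sum_antidiagonal hS₁ hS₂]
    push_cast
    simp only [coeff_gf]
  · have hempty : ({p ∈ S₁ ×ˢ S₂ | w₁ p.1 + w₂ p.2 + c = n} : Set (α × β)) = ∅ :=
      Set.eq_empty_of_forall_notMem fun p hp => hc (by have := hp.2; omega)
    rw [hempty, Set.ncard_empty, Nat.cast_zero]

end WeightedGF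

theorem List.append_inj_of_shift_eq_nil {α : Type*} {V : List α → List α → Prop}
    (hV : ∀ A R t R', V A R → V (A ++ t) R' → R = t ++ R' → t = [])
    {A R A' R' : List α} (hAR : V A R) (hAR' : V A' R') (h : A ++ R = A' ++ R') :
    A = A' ∧ R = R' := by
  rcases List.append_eq_append_iff.1 h with ⟨t, rfl, hR⟩ | ⟨t, rfl, hR'⟩
  · obtain rfl := hV _ _ _ _ hAR hAR' hR
    simpa using hR
  · obtain rfl := hV _ _ _ _ hAR' hAR hR'
    simpa using hR'.symm

theorem Set.BijOn.sep_prod_left {α β γ : Type*} {f : α × β → γ} {s₁ : Set α} {s₂ : Set β}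
    {t : Set γ} (h : Set.BijOn f (s₁ ×ˢ s₂) t) {p : α → Prop} {q : γ → Prop}
    (hpq : ∀ x ∈ s₁ ×ˢ s₂, q (f x) ↔ p x.1) :
    Set.BijOn f ({a ∈ s₁ | p a} ×ˢ s₂) {c ∈ t | q c} := by
  refine ⟨fun x hx => ⟨h.mapsTo ⟨hx.1.1, hx.2⟩, (hpq x ⟨hx.1.1, hx.2⟩).2 hx.1.2⟩,
    h.injOn.mono fun x hx => (⟨hx.1.1, hx.2⟩ : x ∈ s₁ ×ˢ s₂), fun c hc => ?_⟩
  obtain ⟨x, hx, rfl⟩ := h.surjOn hc.1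
  exact ⟨x, ⟨⟨hx.1, (hpq x hx).1 hc.2⟩, hx.2⟩, rfl⟩

theorem PowerSeries.eq_of_eq_one_add_X_mul_pow {R : Type*} [CommRing R] {k : ℕ}
    {C₁ C₂ : PowerSeries R} (h₁ : C₁ = 1 + X * C₁ ^ k) (h₂ : C₂ = 1 + X * C₂ ^ k) :
    C₁ = C₂ := by
  set S := ∑ i ∈ range k, C₁ ^ i * C₂ ^ (k - 1 - i)
  have hS : IsUnit (1 - X * S) := by
    rw [isUnit_iff_constantCoeff]; simp
  have hprod : (C₁ - C₂) * (1 - X * S) = 0 := by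
    linear_combination h₁ - h₂ - X * geom_sum₂_mul C₁ C₂ k
  exact sub_eq_zero.1 (hS.mul_left_eq_zero.1 hprod)

namespace FinePaths

def Steps (k : ℕ) (L : List ℤ) : Prop := ∀ s ∈ L, s = 1 ∨ s = 1 - (k : ℤ)

def Nonneg (L : List ℤ) : Prop := ∀ i, 0 ≤ (L.take i).sum

def downs (k : ℕ) (L : List ℤ) : ℕ := L.count (1 - (k : ℤ))

def pathsTo (k m : ℕ) : Set (List ℤ) := {L | Steps k L ∧ Nonneg L ∧ L.sum = m}

variable {k r m : ℕ} {A B L : List ℤ}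

lemma steps_append : Steps k (A ++ B) ↔ Steps k A ∧ Steps k B :=
  List.forall_mem_append

lemma steps_cons {x : ℤ} : Steps k (x :: L) ↔ (x = 1 ∨ x = 1 - (k : ℤ)) ∧ Steps k L :=
  List.forall_mem_cons

lemma length_eq_sum_add_downs (h : Steps k L) :
    (L.length : ℤ) = L.sum + k * downs k L := by
  induction L with
  | nil => simp [downs]
  | cons x L ih =>
    obtain ⟨hx, hL⟩ := steps_cons.1 h
    simp only [downs, List.length_cons, List.sum_cons, List.count_cons, beq_iff_eq] at ih ⊢
    rcases hx with rfl | rfl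
    · split_ifs <;> push_cast <;> linarith [ih hL]
    · rw [if_pos rfl]; push_cast; linarith [ih hL]

lemma finite_steps_length (k N : ℕ) : {L : List ℤ | Steps k L ∧ L.length = N}.Finite := by
  let s : Set ℤ := {1, 1 - (k : ℤ)}
  have : Finite s := (Set.toFinite _)
  refine ((List.finite_length_eq s N).image (List.map Subtype.val)).subset ?_
  rintro L ⟨hL, rfl⟩
  lift L to List s using hL
  exact ⟨L, by simp, rfl⟩

lemma downs_append : downs k (A ++ B) = downs k A + downs k B := List.count_append ..

lemma downs_cons_one (hk : k ≠ 0) : downs k (1 :: L) = downs k L := by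
  simp [downs, List.count_cons]; omega

lemma downs_cons_down : downs k ((1 - k) :: L) = downs k L + 1 := by
  simp [downs]

lemma sum_take_length_append (A B : List ℤ) (j : ℕ) :
    ((A ++ B).take (A.length + j)).sum = A.sum + (B.take j).sum := by
  rw [List.take_length_add_append, List.sum_append]

lemma nonneg_append_iff : Nonneg (A ++ B) ↔ Nonneg A ∧ ∀ j, 0 ≤ A.sum + (B.take j).sum := by
  refine ⟨fun h => ⟨fun i => ?_, fun j => sum_take_length_append A B j ▸ h _⟩,
    fun ⟨hA, hB⟩ i => ?_⟩
  · rcases le_total i A.length with hi | hi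
    · simpa [List.take_append_of_le_length hi] using h i
    · simpa [List.take_of_length_le hi, List.take_left'] using h A.length
  · rcases le_total i A.length with hi | hi
    · simpa [List.take_append_of_le_length hi] using hA i
    · obtain ⟨j, rfl⟩ := Nat.exists_eq_add_of_le hi
      rw [sum_take_length_append]; exact hB j

lemma Nonneg.sum_nonneg (h : Nonneg L) : 0 ≤ L.sum := by
  simpa using h L.length

lemma Nonneg.append (hA : Nonneg A) (hB : Nonneg B) (h : 0 ≤ A.sum) : Nonneg (A ++ B) :=
  nonneg_append_iff.2 ⟨hA, fun j => add_nonneg h (hB j)⟩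

lemma nonneg_concat_iff {x : ℤ} : Nonneg (A ++ [x]) ↔ Nonneg A ∧ 0 ≤ A.sum + x := by
  rw [nonneg_append_iff]
  refine and_congr_right fun hA => ⟨fun h => by simpa using h 1, fun h j => ?_⟩
  rcases j with _ | _
  · simpa using hA.sum_nonneg
  · simpa using h

lemma nonneg_iff_forall_le_length : Nonneg L ↔ ∀ j ≤ L.length, 0 ≤ (L.take j).sum := by
  refine ⟨fun h j _ => h j, fun h j => ?_⟩
  rcases le_total j L.length with hj | hj
  · exact h j hj
  · simpa [List.take_of_length_le hj] using h L.length le_rfl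

lemma Nonneg.one_cons (h : Nonneg L) : Nonneg (1 :: L) := by
  rintro (_ | i)
  · simp
  · rw [List.take_succ_cons, List.sum_cons]; linarith [h i]

lemma Nonneg.sum_nonneg_of_prefix (h : Nonneg L) (hA : A <+: L) : 0 ≤ A.sum := by
  rw [List.prefix_iff_eq_take.1 hA]; exact h _

lemma sum_pos_of_prefix_one_cons (hB : Nonneg B) (hA : A <+: 1 :: B) (hne : A ≠ []) :
    0 < A.sum := by
  obtain ⟨A', rfl, hA'⟩ := (List.prefix_cons_iff.1 hA).resolve_left hne
  rw [List.sum_cons]; linarith [hB.sum_nonneg_of_prefix hA']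

lemma exists_eq_append_cons {i : ℕ} (hi : i < L.length) :
    ∃ A x B, L = A ++ x :: B ∧ A.length = i :=
  ⟨L.take i, L[i], L.drop (i + 1), by rw [← List.drop_eq_getElem_cons hi, List.take_append_drop],
    by simp; omega⟩

lemma finiteFibers_pathsTo (k m : ℕ) : FiniteFibers (downs k) (pathsTo k m) := by
  intro n
  refine (finite_steps_length k (m + k * n)).subset ?_
  rintro L ⟨⟨hs, -, hsum⟩, hn⟩
  refine ⟨hs, ?_⟩
  have := length_eq_sum_add_downs hs
  rw [hsum, hn] at this
  exact_mod_cast this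

lemma mapsTo_append_one_cons :
    Set.MapsTo (fun p : List ℤ × List ℤ => p.1 ++ 1 :: p.2) (pathsTo k 0 ×ˢ pathsTo k m)
      (pathsTo k (m + 1)) := by
  rintro ⟨A, R⟩ ⟨⟨hAs, hAn, hA0⟩, ⟨hRs, hRn, hRm⟩⟩
  simp only [Nat.cast_zero] at hA0
  refine ⟨steps_append.2 ⟨hAs, steps_cons.2 ⟨Or.inl rfl, hRs⟩⟩,
    hAn.append hRn.one_cons hA0.ge, ?_⟩
  simp [hA0, hRm, add_comm]

lemma injOn_append_one_cons :
    Set.InjOn (fun p : List ℤ × List ℤ => p.1 ++ 1 :: p.2) (pathsTo k 0 ×ˢ pathsTo k m) := by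
  rintro ⟨A, R⟩ ⟨⟨-, -, hA0⟩, ⟨-, hRn, -⟩⟩ ⟨A', R'⟩ ⟨⟨-, -, hA'0⟩, ⟨-, hR'n, -⟩⟩ h
  have key := List.append_inj_of_shift_eq_nil
    (V := fun A R => A.sum = 0 ∧ ∃ R₀, R = 1 :: R₀ ∧ Nonneg R₀) ?_
    ⟨by simpa using hA0, R, rfl, hRn⟩ ⟨by simpa using hA'0, R', rfl, hR'n⟩ h
  · simpa using key
  rintro A _ t R' ⟨hA0, R₀, rfl, hR₀⟩ ⟨hAt, -⟩ heq
  by_contra hne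
  have := sum_pos_of_prefix_one_cons hR₀ ⟨R', heq.symm⟩ hne
  rw [List.sum_append, hA0] at hAt
  linarith

lemma exists_last_zero (h : L.sum ≠ 0) :
    ∃ A x R, L = A ++ x :: R ∧ A.sum = 0 ∧ ∀ j, x + (R.take j).sum ≠ 0 := by
  classical
  set i := Nat.findGreatest (fun i => (L.take i).sum = 0) L.length
  have hi0 : (L.take i).sum = 0 :=
    Nat.findGreatest_spec (P := fun i => (L.take i).sum = 0) (Nat.zero_le _) (by simp)
  have hiL : i < L.length :=
    lt_of_le_of_ne (Nat.findGreatest_le _) fun hi => h (by rwa [hi, List.take_length] at hi0)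
  obtain ⟨A, x, R, rfl, hAi⟩ := exists_eq_append_cons hiL
  rw [← hAi, List.take_left' rfl] at hi0
  refine ⟨A, x, R, rfl, hi0, fun j hj => ?_⟩
  have hsum : ((A ++ x :: R).take (A.length + (j + 1))).sum = 0 := by
    rw [sum_take_length_append, List.take_succ_cons, List.sum_cons, hi0, zero_add, hj]
  rcases le_total (A.length + (j + 1)) (A ++ x :: R).length with hjL | hjL
  · exact Nat.findGreatest_is_greatest (show i < A.length + (j + 1) by omega) hjL hsum
  · exact h (by rwa [List.take_of_length_le hjL] at hsum)

lemma surjOn_append_one_cons (hk : 2 ≤ k) :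
    Set.SurjOn (fun p : List ℤ × List ℤ => p.1 ++ 1 :: p.2) (pathsTo k 0 ×ˢ pathsTo k m)
      (pathsTo k (m + 1)) := by
  rintro L ⟨hs, hnn, hsum⟩
  obtain ⟨A, x, R, rfl, hA0, hne⟩ := exists_last_zero (L := L) (by rw [hsum]; omega)
  have hpos : ∀ j, 0 < x + (R.take j).sum := fun j => by
    have := hnn (A.length + (j + 1))
    rw [sum_take_length_append, List.take_succ_cons, List.sum_cons, hA0, zero_add] at this
    exact lt_of_le_of_ne this (hne j).symm
  obtain ⟨hAs, hxs, hRs⟩ : Steps k A ∧ (x = 1 ∨ x = 1 - (k : ℤ)) ∧ Steps k R := by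
    rw [steps_append, steps_cons] at hs; exact ⟨hs.1, hs.2⟩
  obtain rfl : x = 1 := by
    have := hpos 0
    rcases hxs with hx | hx <;> simp at this <;> omega
  refine ⟨(A, R), ⟨⟨hAs, (nonneg_append_iff.1 hnn).1, by simpa using hA0⟩,
    ⟨hRs, fun j => by linarith [hpos j], ?_⟩⟩, rfl⟩
  simp only [List.sum_append, List.sum_cons, hA0] at hsum
  push_cast at hsum
  linarith

lemma bijOn_append_one_cons (hk : 2 ≤ k) :
    Set.BijOn (fun p : List ℤ × List ℤ => p.1 ++ 1 :: p.2) (pathsTo k 0 ×ˢ pathsTo k m)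
      (pathsTo k (m + 1)) :=
  ⟨mapsTo_append_one_cons, injOn_append_one_cons, surjOn_append_one_cons hk⟩

lemma mapsTo_first_return (hk : 2 ≤ k) :
    Set.MapsTo (fun p : List ℤ × List ℤ => 1 :: p.1 ++ (1 - (k : ℤ)) :: p.2)
      (pathsTo k (k - 2) ×ˢ pathsTo k 0) {L ∈ pathsTo k 0 | L ≠ []} := by
  rintro ⟨M, B⟩ ⟨⟨hMs, hMn, hMsum⟩, ⟨hBs, hBn, hB0⟩⟩
  push_cast [Nat.cast_sub hk] at hMsum
  simp only [Nat.cast_zero] at hB0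
  have hnn : Nonneg (1 :: M ++ [1 - (k : ℤ)]) :=
    nonneg_concat_iff.2 ⟨hMn.one_cons, by simp only [List.sum_cons, hMsum]; linarith⟩
  refine ⟨⟨?_, ?_, ?_⟩, by simp⟩
  · exact steps_append.2 ⟨steps_cons.2 ⟨Or.inl rfl, hMs⟩, steps_cons.2 ⟨Or.inr rfl, hBs⟩⟩
  · simpa using hnn.append hBn (by simp [hMsum])
  · simp [hMsum, hB0]

lemma injOn_first_return (hk : 2 ≤ k) :
    Set.InjOn (fun p : List ℤ × List ℤ => 1 :: p.1 ++ (1 - (k : ℤ)) :: p.2)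
      (pathsTo k (k - 2) ×ˢ pathsTo k 0) := by
  rintro ⟨M, B⟩ ⟨⟨-, hMn, hMsum⟩, -⟩ ⟨M', B'⟩ ⟨⟨-, hM'n, hM'sum⟩, -⟩ h
  simp only [List.cons_append, List.cons.injEq, true_and] at h
  have key := List.append_inj_of_shift_eq_nil
    (V := fun M R => Nonneg M ∧ M.sum = ((k - 2 : ℕ) : ℤ) ∧ ∃ B, R = (1 - (k : ℤ)) :: B) ?_
    ⟨hMn, hMsum, B, rfl⟩ ⟨hM'n, hM'sum, B', rfl⟩ h
  · simpa using key
  rintro M _ t R' ⟨-, hMsum, B, rfl⟩ ⟨hMt, -⟩ heq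
  by_contra hne
  obtain ⟨t', rfl, -⟩ := (List.prefix_cons_iff.1 ⟨R', heq.symm⟩).resolve_left hne
  have := (nonneg_append_iff.1 hMt).2 1
  push_cast [Nat.cast_sub hk] at hMsum
  simp only [List.take_succ_cons, List.take_zero, List.sum_cons, List.sum_nil, hMsum] at this
  omega

lemma exists_first_neg (h : L.sum < 0) :
    ∃ M y B, L = M ++ y :: B ∧ Nonneg M ∧ M.sum + y < 0 := by
  classical
  have hex : ∃ j, (L.take j).sum < 0 := ⟨L.length, by simpa using h⟩
  have hj0 : Nat.find hex ≠ 0 := fun h0 => by simpa [h0] using Nat.find_spec hex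
  have hjL : Nat.find hex ≤ L.length := Nat.find_min' hex (by simpa using h)
  obtain ⟨M, y, B, rfl, hMj⟩ := exists_eq_append_cons (show Nat.find hex - 1 < L.length by omega)
  refine ⟨M, y, B, rfl, nonneg_iff_forall_le_length.2 fun j hj => ?_, ?_⟩
  · simpa [List.take_append_of_le_length hj] using
      not_lt.1 (Nat.find_min hex (show j < Nat.find hex by omega))
  · simpa [show Nat.find hex = M.length + 1 by omega, sum_take_length_append] using
      Nat.find_spec hex

lemma surjOn_first_return (hk : 2 ≤ k) :
    Set.SurjOn (fun p : List ℤ × List ℤ => 1 :: p.1 ++ (1 - (k : ℤ)) :: p.2)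
      (pathsTo k (k - 2) ×ˢ pathsTo k 0) {L ∈ pathsTo k 0 | L ≠ []} := by
  rintro _ ⟨⟨hs, hnn, hsum⟩, hne⟩
  obtain ⟨x, L, rfl⟩ := List.exists_cons_of_ne_nil hne
  obtain ⟨hxs, hLs⟩ := steps_cons.1 hs
  have hcons : ∀ j, 0 ≤ x + (L.take j).sum := fun j => by simpa using hnn (j + 1)
  obtain rfl : x = 1 := by
    have := hcons 0
    rcases hxs with hx | hx <;> simp at this <;> omega
  obtain ⟨M, y, B, rfl, hMn, hMy⟩ := exists_first_neg (L := L) (by simp at hsum; linarith)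
  obtain ⟨hMs, hys, hBs⟩ : Steps k M ∧ (y = 1 ∨ y = 1 - (k : ℤ)) ∧ Steps k B := by
    rw [steps_append, steps_cons] at hLs; exact ⟨hLs.1, hLs.2⟩
  have hcons' : ∀ j, 0 ≤ 1 + M.sum + y + (B.take j).sum := fun j => by
    simpa [sum_take_length_append, add_assoc] using hcons (M.length + (j + 1))
  obtain rfl : y = 1 - k := by
    rcases hys with rfl | h
    · linarith [hMn.sum_nonneg]
    · exact h
  have hMsum : M.sum = k - 2 := by
    have := hcons' 0
    simp only [List.take_zero, List.sum_nil] at this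
    linarith
  refine ⟨(M, B), ⟨⟨hMs, hMn, by push_cast [Nat.cast_sub hk]; exact hMsum⟩,
    ⟨hBs, fun j => by linarith [hcons' j], ?_⟩⟩, by simp⟩
  simp only [List.sum_cons, List.sum_append] at hsum
  push_cast at hsum ⊢
  linarith

lemma bijOn_first_return (hk : 2 ≤ k) :
    Set.BijOn (fun p : List ℤ × List ℤ => 1 :: p.1 ++ (1 - (k : ℤ)) :: p.2)
      (pathsTo k (k - 2) ×ˢ pathsTo k 0) {L ∈ pathsTo k 0 | L ≠ []} :=
  ⟨mapsTo_first_return hk, injOn_first_return hk, surjOn_first_return hk⟩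

def hill (k r : ℕ) : List ℤ := List.replicate r 1 ++ [1 - (k : ℤ)]

def finePathsTo (k r m : ℕ) : Set (List ℤ) := {L ∈ pathsTo k m | ¬ HasHill k r L}

lemma length_hill : (hill k r).length = r + 1 := by simp [hill]

lemma sum_hill : (hill k r).sum = r + 1 - k := by simp [hill]; ring

lemma downs_hill (hk : k ≠ 0) : downs k (hill k r) = 1 := by
  simp [hill, downs, List.count_replicate]; omega

lemma steps_hill : Steps k (hill k r) :=
  steps_append.2 ⟨fun _ hs => Or.inl (List.eq_of_mem_replicate hs), by simp [Steps]⟩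

lemma getD_hill_append (B : List ℤ) {j : ℕ} (hj : j ≤ r) :
    (hill k r ++ B).getD j 0 = if j < r then 1 else 1 - (k : ℤ) := by
  rw [hill, List.append_assoc, List.getD_eq_getElem?_getD]
  split_ifs with h
  · simp [List.getElem?_append_left (by simpa using h : j < (List.replicate r (1 : ℤ)).length), h]
  · rw [show j = r by omega, List.getElem?_append_right (by simp)]
    simp

lemma hasHill_iff : HasHill k r L ↔ ∃ P B, L = P ++ hill k r ++ B ∧ (P ++ hill k r).sum = 0 := by
  constructor
  · rintro ⟨i, hlen, hup, hdown, hsum⟩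
    have hseg : (L.drop i).take (r + 1) = hill k r := by
      refine List.ext_getElem (by simp [length_hill]; omega) fun j h₁ h₂ => ?_
      rw [length_hill] at h₂
      rw [List.getElem_take, List.getElem_drop, ← List.getD_eq_getElem (d := 0),
        ← List.getD_eq_getElem (d := 0), ← List.append_nil (hill k r),
        getD_hill_append _ (by omega)]
      split_ifs with hj
      · exact hup j hj
      · rw [show j = r by omega]; exact hdown
    refine ⟨L.take i, L.drop (i + r + 1), ?_, ?_⟩
    · rw [← hseg, ← List.take_add, ← add_assoc, List.take_append_drop]
    · rw [← hseg, ← List.take_add, ← add_assoc, hsum]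
  · rintro ⟨P, B, rfl, hsum⟩
    refine ⟨P.length, by simp [length_hill]; omega, fun j hj => ?_, ?_, ?_⟩
    · rw [List.append_assoc, List.getD_append_right _ _ _ _ (by omega), Nat.add_sub_cancel_left,
        getD_hill_append _ hj.le, if_pos hj]
    · rw [List.append_assoc, List.getD_append_right _ _ _ _ (by omega), Nat.add_sub_cancel_left,
        getD_hill_append _ le_rfl, if_neg (lt_irrefl r)]
    · rw [List.take_left' (by simp [length_hill]; omega), hsum]

lemma hasHill_append_one_cons (hA : A.sum = 0) (hB : Nonneg B) :
    HasHill k r (A ++ 1 :: B) ↔ HasHill k r A := by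
  simp only [hasHill_iff]
  constructor
  · rintro ⟨P, C, heq, hP⟩
    rcases List.append_eq_append_iff.1 heq with ⟨t, ht, hB'⟩ | ⟨t, rfl, -⟩
    · obtain rfl : t = [] := by
        by_contra hne
        have := sum_pos_of_prefix_one_cons hB ⟨C, hB'.symm⟩ hne
        rw [ht, List.sum_append, hA] at hP
        linarith
      exact ⟨P, [], by simpa using ht.symm, hP⟩
    · exact ⟨P, t, rfl, hP⟩
  · rintro ⟨P, C, rfl, hP⟩
    exact ⟨P, C ++ 1 :: B, by simp, hP⟩

lemma bijOn_fine_append_one_cons (hk : 2 ≤ k) :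
    Set.BijOn (fun p : List ℤ × List ℤ => p.1 ++ 1 :: p.2) (finePathsTo k r 0 ×ˢ pathsTo k m)
      (finePathsTo k r (m + 1)) :=
  (bijOn_append_one_cons hk).sep_prod_left fun _ hp =>
    not_congr (hasHill_append_one_cons (by simpa using hp.1.2.2) hp.2.2.1)

lemma mapsTo_append_hill (hk : 2 ≤ k) (hr : r ≤ k - 1) :
    Set.MapsTo (fun p : List ℤ × List ℤ => p.1 ++ hill k r ++ p.2)
      (finePathsTo k r (k - 1 - r) ×ˢ pathsTo k 0) {L ∈ pathsTo k 0 | HasHill k r L} := by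
  rintro ⟨P, B⟩ ⟨⟨⟨hPs, hPn, hPsum⟩, -⟩, ⟨hBs, hBn, hB0⟩⟩
  simp only [Nat.cast_zero] at hB0
  have hPh : (P ++ hill k r).sum = 0 := by
    rw [List.sum_append, hPsum, sum_hill]; omega
  have hrep : Nonneg (List.replicate r 1) := fun i => by simp [List.take_replicate]
  have hPn' : Nonneg (P ++ hill k r) := by
    rw [hill, ← List.append_assoc, nonneg_concat_iff]
    refine ⟨hPn.append hrep hPn.sum_nonneg, ?_⟩
    simp only [hill, List.sum_append, List.sum_cons, List.sum_nil] at hPh ⊢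
    linarith
  refine ⟨⟨steps_append.2 ⟨steps_append.2 ⟨hPs, steps_hill⟩, hBs⟩, hPn'.append hBn hPh.ge, ?_⟩,
    hasHill_iff.2 ⟨P, B, rfl, hPh⟩⟩
  rw [List.sum_append, hPh, hB0, Nat.cast_zero, add_zero]

lemma injOn_append_hill (hk : 2 ≤ k) (hr : r ≤ k - 1) :
    Set.InjOn (fun p : List ℤ × List ℤ => p.1 ++ hill k r ++ p.2)
      (finePathsTo k r (k - 1 - r) ×ˢ pathsTo k 0) := by
  rintro ⟨P, B⟩ ⟨⟨⟨-, -, hPsum⟩, hPh⟩, -⟩ ⟨P', B'⟩ ⟨⟨⟨-, -, hP'sum⟩, hP'h⟩, -⟩ h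
  simp only [List.append_assoc] at h
  have key := List.append_inj_of_shift_eq_nil
    (V := fun P R => ¬ HasHill k r P ∧ P.sum = ((k - 1 - r : ℕ) : ℤ) ∧ ∃ B, R = hill k r ++ B) ?_
    ⟨hPh, hPsum, B, rfl⟩ ⟨hP'h, hP'sum, B', rfl⟩ h
  · simpa using key
  rintro P _ t R' ⟨-, hPsum, B, rfl⟩ ⟨hPt, hPtsum, -⟩ heq
  have ht0 : t.sum = 0 := by rw [List.sum_append, hPsum] at hPtsum; linarith
  have hno : ¬ hill k r <+: t := by
    rintro ⟨u, rfl⟩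
    refine hPt (hasHill_iff.2 ⟨P, u, by simp, ?_⟩)
    rw [List.sum_append, hPsum, sum_hill]; omega
  rcases List.prefix_or_prefix_of_prefix (List.prefix_append (hill k r) B) ⟨R', heq.symm⟩
    with ht | ht
  · exact absurd ht hno
  rw [hill, List.prefix_concat_iff] at ht
  rcases ht with rfl | ht
  · exact absurd List.prefix_rfl hno
  have hrep : t = List.replicate t.length 1 :=
    List.eq_replicate_iff.2 ⟨rfl, fun x hx => List.eq_of_mem_replicate (ht.subset hx)⟩
  rw [hrep, List.sum_replicate, nsmul_eq_mul, mul_one, Nat.cast_eq_zero] at ht0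
  exact List.length_eq_zero_iff.1 ht0

lemma surjOn_append_hill (hk : 2 ≤ k) (hr : r ≤ k - 1) :
    Set.SurjOn (fun p : List ℤ × List ℤ => p.1 ++ hill k r ++ p.2)
      (finePathsTo k r (k - 1 - r) ×ˢ pathsTo k 0) {L ∈ pathsTo k 0 | HasHill k r L} := by
  classical
  rintro L ⟨⟨hs, hnn, hsum⟩, hL⟩
  have hex : ∃ n, ∃ P B, L = P ++ hill k r ++ B ∧ (P ++ hill k r).sum = 0 ∧ P.length = n := by
    obtain ⟨P, B, h⟩ := hasHill_iff.1 hL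
    exact ⟨_, P, B, h.1, h.2, rfl⟩
  obtain ⟨P, B, rfl, hPh, hPlen⟩ := Nat.find_spec hex
  have hPfine : ¬ HasHill k r P := by
    intro hP
    obtain ⟨P₁, B₁, rfl, h₁⟩ := hasHill_iff.1 hP
    have hlt : P₁.length < Nat.find hex := by
      rw [← hPlen, List.length_append, List.length_append, length_hill]; omega
    exact Nat.find_min hex hlt ⟨P₁, B₁ ++ hill k r ++ B, by simp, h₁, rfl⟩
  obtain ⟨hPn', hBn⟩ := nonneg_append_iff.1 hnn
  rw [hPh] at hBn
  have hsteps := steps_append.1 hs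
  refine ⟨(P, B), ⟨⟨⟨(steps_append.1 hsteps.1).1, (nonneg_append_iff.1 hPn').1, ?_⟩, hPfine⟩,
    ⟨hsteps.2, fun j => by simpa using hBn j, ?_⟩⟩, rfl⟩
  · show P.sum = _
    rw [List.sum_append, sum_hill] at hPh; omega
  · rw [List.sum_append, hPh] at hsum; simpa using hsum

lemma bijOn_append_hill (hk : 2 ≤ k) (hr : r ≤ k - 1) :
    Set.BijOn (fun p : List ℤ × List ℤ => p.1 ++ hill k r ++ p.2)
      (finePathsTo k r (k - 1 - r) ×ˢ pathsTo k 0) {L ∈ pathsTo k 0 | HasHill k r L} :=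
  ⟨mapsTo_append_hill hk hr, injOn_append_hill hk hr, surjOn_append_hill hk hr⟩

lemma finiteFibers_finePathsTo (k r m : ℕ) : FiniteFibers (downs k) (finePathsTo k r m) :=
  (finiteFibers_pathsTo k m).subset (Set.sep_subset _ _)

lemma gf_pathsTo_succ (hk : 2 ≤ k) (m : ℕ) :
    gf (downs k) (pathsTo k (m + 1)) =
      gf (downs k) (pathsTo k 0) * gf (downs k) (pathsTo k m) := by
  rw [gf_eq_of_bijOn (bijOn_append_one_cons hk) 0 ?_ (finiteFibers_pathsTo k 0)
    (finiteFibers_pathsTo k m), pow_zero, one_mul]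
  rintro ⟨A, R⟩ -
  simp [downs_append, downs_cons_one (by omega : k ≠ 0)]

lemma gf_finePathsTo_succ (hk : 2 ≤ k) (m : ℕ) :
    gf (downs k) (finePathsTo k r (m + 1)) =
      gf (downs k) (finePathsTo k r 0) * gf (downs k) (pathsTo k m) := by
  rw [gf_eq_of_bijOn (bijOn_fine_append_one_cons hk) 0 ?_ (finiteFibers_finePathsTo k r 0)
    (finiteFibers_pathsTo k m), pow_zero, one_mul]
  rintro ⟨A, R⟩ -
  simp [downs_append, downs_cons_one (by omega : k ≠ 0)]

lemma gf_pathsTo (hk : 2 ≤ k) (m : ℕ) :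
    gf (downs k) (pathsTo k m) = gf (downs k) (pathsTo k 0) ^ (m + 1) := by
  induction m with
  | zero => rw [pow_one]
  | succ m ih => rw [gf_pathsTo_succ hk, ih, pow_succ' _ (m + 1)]

lemma gf_finePathsTo (hk : 2 ≤ k) (m : ℕ) :
    gf (downs k) (finePathsTo k r m) =
      gf (downs k) (finePathsTo k r 0) * gf (downs k) (pathsTo k 0) ^ m := by
  cases m with
  | zero => rw [pow_zero, mul_one]
  | succ m => rw [gf_finePathsTo_succ hk, gf_pathsTo hk]

lemma gf_pathsTo_zero (hk : 2 ≤ k) :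
    gf (downs k) (pathsTo k 0) = 1 + X * gf (downs k) (pathsTo k 0) ^ k := by
  have hnil : {L ∈ pathsTo k 0 | ¬ L ≠ []} = {[]} := by
    ext L
    simp only [ne_eq, not_not, Set.mem_ofPred_eq, Set.mem_singleton_iff, and_iff_right_iff_imp]
    rintro rfl
    exact ⟨by simp [Steps], by simp [Nonneg], by simp⟩
  have hret := gf_eq_of_bijOn (w := downs k) (bijOn_first_return hk) 1 ?_
    (finiteFibers_pathsTo k (k - 2)) (finiteFibers_pathsTo k 0)
  · calc gf (downs k) (pathsTo k 0)
        = gf (downs k) {L ∈ pathsTo k 0 | L ≠ []} + gf (downs k) {L ∈ pathsTo k 0 | ¬ L ≠ []} :=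
          (gf_sep_add_gf_sep_not (finiteFibers_pathsTo k 0) _).symm
      _ = 1 + X * gf (downs k) (pathsTo k 0) ^ (k - 2 + 1 + 1) := by
          rw [hnil, gf_singleton, hret, gf_pathsTo hk, pow_one, ← pow_succ]
          simp [downs, add_comm]
      _ = 1 + X * gf (downs k) (pathsTo k 0) ^ k := by rw [show k - 2 + 1 + 1 = k by omega]
  rintro ⟨M, B⟩ -
  simp [downs_append, downs_cons_one (by omega : k ≠ 0), downs_cons_down]
  omega

lemma gf_pathsTo_zero_eq_fine_mul (hk : 2 ≤ k) (hr : r ≤ k - 1) :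
    gf (downs k) (pathsTo k 0) =
      gf (downs k) (finePathsTo k r 0) * (1 + X * gf (downs k) (pathsTo k 0) ^ (k - r)) := by
  have hhill := gf_eq_of_bijOn (w := downs k) (bijOn_append_hill hk hr) 1 ?_
    (finiteFibers_finePathsTo k r (k - 1 - r)) (finiteFibers_pathsTo k 0)
  · calc gf (downs k) (pathsTo k 0)
        = gf (downs k) {L ∈ pathsTo k 0 | HasHill k r L} + gf (downs k) (finePathsTo k r 0) :=
          (gf_sep_add_gf_sep_not (finiteFibers_pathsTo k 0) _).symm
      _ = gf (downs k) (finePathsTo k r 0) *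
            (1 + X * gf (downs k) (pathsTo k 0) ^ (k - 1 - r + 1)) := by
          rw [hhill, gf_finePathsTo hk, pow_succ]; ring
      _ = _ := by rw [show k - 1 - r + 1 = k - r by omega]
  rintro ⟨P, B⟩ -
  simp [downs_append, downs_hill (by omega : k ≠ 0)]
  omega

lemma dyckSet_eq_pathsTo_sep (hk : k ≠ 0) (n : ℕ) :
    DyckSet k 0 n 0 = {L ∈ pathsTo k 0 | downs k L = n} := by
  ext L
  simp only [DyckSet, pathsTo, Set.mem_ofPred_eq, Nat.cast_zero, neg_zero, mul_zero]
  refine ⟨fun ⟨hlen, hsum, hs, hnn⟩ => ⟨⟨hs, hnn, hsum⟩, ?_⟩, fun ⟨⟨hs, hnn, hsum⟩, hn⟩ =>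
    ⟨?_, hsum, hs, hnn⟩⟩
  · have := length_eq_sum_add_downs hs
    rw [hlen, hsum] at this
    push_cast at this
    have hk' : (k : ℤ) ≠ 0 := by exact_mod_cast hk
    exact_mod_cast (mul_left_cancel₀ hk' (this.trans (zero_add _))).symm
  · have := length_eq_sum_add_downs hs
    rw [hsum, hn] at this
    exact_mod_cast this.trans (zero_add _)

lemma mk_F_eq_gf (hk : k ≠ 0) :
    mk (fun n => (F k 0 r n 0 : ℚ)) = gf (downs k) (finePathsTo k r 0) := by
  ext n
  rw [coeff_mk, coeff_gf, F, Nat.card_coe_set_eq, dyckSet_eq_pathsTo_sep hk]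
  congr 2
  ext L
  simp only [finePathsTo, Set.mem_ofPred_eq]
  tauto

end FinePaths

theorem fine_gf_general (k r : ℕ) (hk : 2 ≤ k) (hr2 : r ≤ k - 1)
    (Ck : PowerSeries ℚ)
    (h2 : Ck = 1 + PowerSeries.X * Ck ^ k) :
    PowerSeries.mk (fun n => (F k 0 r n 0 : ℚ)) *
      (1 + PowerSeries.X * Ck ^ (k - r)) = Ck := by
  obtain rfl := PowerSeries.eq_of_eq_one_add_X_mul_pow h2 (FinePaths.gf_pathsTo_zero hk)
  rw [FinePaths.mk_F_eq_gf (by omega)]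
  exact (FinePaths.gf_pathsTo_zero_eq_fine_mul hk hr2).symm

/-- The generating function of the `(k,r)`-Fine numbers satisfies
`F_{k,r}(t) = C_k(t) / (1 + t·C_k(t)^(k-r))`, i.e.
`F_{k,r}(t) · (1 + t·C_k(t)^(k-r)) = C_k(t)`. -/
theorem fine_gf (k r : ℕ) (hk : 2 ≤ k) (hr1 : 1 ≤ r) (hr2 : r ≤ k - 1)
    (Ck : PowerSeries ℚ) (h1 : PowerSeries.constantCoeff Ck = 1)
    (h2 : Ck = 1 + PowerSeries.X * Ck ^ k) :
    PowerSeries.mk (fun n => (F k 0 r n 0 : ℚ)) *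
      (1 + PowerSeries.X * Ck ^ (k - r)) = Ck :=
  fine_gf_general k r hk hr2 Ck h2
end

section
/- The generating function F(t) of the Fine numbers satisfies F(t) = C(t)/(1 + t·C(t)), where C(t) is the Catalan number generating function satisfying C(t) = 1 + t·C(t)^2; equivalently F(t)·(1 + t·C(t)) = C(t). -/
open Finset PowerSeries

/-! A nonempty Dyck word factors uniquely at its first return to the axis as `(X)Y`, and it is
hill-free iff `X` is nonempty and `Y` is hill-free. Counting gives `F = 1 + t (C - 1) F`, next to
`C = 1 + t C²`; hence `F (1 + t - t C) = 1` and `C (1 + t - t C) = 1 + t C`,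
so `F (1 + t C) = C`. -/

namespace DyckStep

def toInt : DyckStep → ℤ
  | U => 1
  | D => -1

lemma toInt_injective : Function.Injective toInt := by
  rintro (_ | _) (_ | _) h <;> first | rfl | simp [toInt] at h

lemma sum_map_toInt (l : List DyckStep) : (l.map toInt).sum = l.count U - l.count D := by
  induction l with
  | nil => simp
  | cons s l ih => cases s <;> simp [toInt, ih] <;> ring

lemma exists_map_toInt_eq {L : List ℤ} (h : ∀ x ∈ L, x = 1 ∨ x = -1) :
    ∃ l : List DyckStep, l.map toInt = L := by
  induction L with
  | nil => exact ⟨[], rfl⟩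
  | cons x L ih =>
    obtain ⟨l, rfl⟩ := ih fun y hy => h y (List.mem_cons_of_mem x hy)
    rcases h x List.mem_cons_self with rfl | rfl
    exacts [⟨U :: l, rfl⟩, ⟨D :: l, rfl⟩]

end DyckStep

open DyckStep (toInt toInt_injective sum_map_toInt exists_map_toInt_eq)

lemma hasHill_two_one_iff (L : List ℤ) :
    HasHill 2 1 L ↔ ∃ L₁ L₂, L = L₁ ++ 1 :: -1 :: L₂ ∧ L₁.sum = 0 := by
  constructor
  · rintro ⟨i, hi, hU, hD, hsum⟩
    have hi' : i < L.length := by omega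
    have h₁ : L[i] = 1 := by simpa [List.getElem?_eq_getElem hi'] using hU 0 one_pos
    have h₂ : L[i + 1] = -1 := by simpa [List.getElem?_eq_getElem hi] using hD
    refine ⟨L.take i, L.drop (i + 2), ?_, ?_⟩
    · conv_lhs => rw [← List.take_append_drop i L, List.drop_eq_getElem_cons hi',
        List.drop_eq_getElem_cons hi, h₁, h₂]
    · simpa [List.take_add_one, List.getElem?_eq_getElem hi,
        List.getElem?_eq_getElem hi', h₁, h₂] using hsum
  · rintro ⟨L₁, L₂, rfl, h⟩
    exact ⟨L₁.length, by simp, by simp, by simp, by simp [h]⟩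

lemma mem_dyckSet_two_zero_iff {n : ℕ} {L : List ℤ} :
    L ∈ DyckSet 2 0 n 0 ↔ ∃ p : DyckWord, p.semilength = n ∧ p.toList.map toInt = L := by
  constructor
  · rintro ⟨hlen, hsum, hsteps, hpos⟩
    obtain ⟨l, rfl⟩ := exists_map_toInt_eq fun x hx => by simpa using hsteps x hx
    simp only [sum_map_toInt, ← List.map_take] at hsum hpos
    have hbal : l.count .U = l.count .D := by simpa [sub_eq_zero] using hsum
    have hprefix (i : ℕ) : (l.take i).count .D ≤ (l.take i).count .U := by simpa using hpos i
    let p : DyckWord := ⟨l, hbal, hprefix⟩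
    refine ⟨p, ?_, rfl⟩
    have : 2 * p.semilength = l.length := p.two_mul_semilength_eq_length
    rw [List.length_map] at hlen
    omega
  · rintro ⟨p, rfl, rfl⟩
    refine ⟨by simp, by simp [sum_map_toInt, p.count_U_eq_count_D], ?_, fun i => ?_⟩
    · simp only [List.mem_map]
      rintro _ ⟨(_ | _), -, rfl⟩ <;> simp [toInt]
    · simpa [← List.map_take, sum_map_toInt] using p.count_D_le_count_U i

namespace DyckWord

/-- `nest 0` is the hill `UD`; the factors `A` and `B` being Dyck words puts it at height `0`. -/
def IsHillFree (p : DyckWord) : Prop := ∀ A B : DyckWord, p ≠ A + nest 0 + B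

lemma isHillFree_zero : IsHillFree 0 := fun A B h => by
  simpa using (congrArg semilength h).symm

lemma isHillFree_nest_add (X Y : DyckWord) :
    (nest X + Y).IsHillFree ↔ X ≠ 0 ∧ Y.IsHillFree := by
  constructor
  · intro h
    refine ⟨fun hX => h 0 Y (by rw [hX, zero_add]), fun A B hY => h (nest X + A) B ?_⟩
    rw [hY, add_assoc, add_assoc, add_assoc]
  · rintro ⟨hX, hY⟩ A B h
    rcases eq_or_ne A 0 with rfl | hA
    · exact hX (by simpa using congrArg insidePart h)
    · refine hY A.outsidePart B ?_
      simpa [add_assoc, hA] using congrArg outsidePart h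

lemma hasHill_map_toInt_iff (p : DyckWord) :
    HasHill 2 1 (p.toList.map toInt) ↔ ¬ p.IsHillFree := by
  simp only [hasHill_two_one_iff, IsHillFree, not_forall, not_not]
  constructor
  · rintro ⟨L₁, L₂, hp, hL₁⟩
    obtain ⟨l₁, l, hp, rfl, hl⟩ := List.map_eq_append_iff.mp hp
    obtain ⟨a, l, rfl, ha, hl⟩ := List.map_eq_cons_iff.mp hl
    obtain ⟨b, l₂, rfl, hb, -⟩ := List.map_eq_cons_iff.mp hl
    obtain rfl : a = .U := toInt_injective ha
    obtain rfl : b = .D := toInt_injective hb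
    have hl₁ : l₁.count .U = l₁.count .D := by
      rw [sum_map_toInt] at hL₁
      omega
    have hA : (p.toList.take l₁.length).count .U = (p.toList.take l₁.length).count .D := by
      rw [hp, List.take_left, hl₁]
    have hB : (p.toList.take (l₁.length + 2)).count .U =
        (p.toList.take (l₁.length + 2)).count .D := by
      rw [hp, show l₁ ++ .U :: .D :: l₂ = l₁ ++ [.U, .D] ++ l₂ by simp,
        List.take_left' (by simp), List.count_append, List.count_append, hl₁]
      rfl
    refine ⟨p.take _ hA, p.drop _ hB, DyckWord.ext ?_⟩
    show p.toList = p.toList.take l₁.length ++ [.U, .D] ++ p.toList.drop (l₁.length + 2)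
    simp [hp]
  · rintro ⟨A, B, rfl⟩
    refine ⟨A.toList.map toInt, B.toList.map toInt, ?_,
      by simp [sum_map_toInt, A.count_U_eq_count_D]⟩
    show (A.toList ++ [DyckStep.U, .D] ++ B.toList).map toInt = _
    simp [toInt]

end DyckWord

lemma F_two_zero_one_eq_card (n : ℕ) :
    F 2 0 1 n 0 = Nat.card {p : DyckWord // p.semilength = n ∧ p.IsHillFree} := by
  have hinj : Function.Injective fun p : DyckWord => p.toList.map toInt :=
    (List.map_injective_iff.mpr toInt_injective).comp fun _ _ => DyckWord.ext
  have himage : {L | L ∈ DyckSet 2 0 n 0 ∧ ¬ HasHill 2 1 L} =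
      (fun p : DyckWord => p.toList.map toInt) '' {p | p.semilength = n ∧ p.IsHillFree} := by
    ext L
    simp only [Set.mem_ofPred_eq, Set.mem_image, mem_dyckSet_two_zero_iff]
    constructor
    · rintro ⟨⟨p, hn, rfl⟩, h⟩
      exact ⟨p, ⟨hn, by simpa [DyckWord.hasHill_map_toInt_iff] using h⟩, rfl⟩
    · rintro ⟨p, ⟨hn, h⟩, rfl⟩
      exact ⟨⟨p, hn, rfl⟩, by simpa [DyckWord.hasHill_map_toInt_iff] using h⟩
  rw [F, himage, Nat.card_image_of_injective hinj]
  rfl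

namespace DyckWord

lemma semilength_eq_zero_iff {p : DyckWord} : p.semilength = 0 ↔ p = 0 := by
  rw [← toList_eq_nil, ← List.length_eq_zero_iff, ← two_mul_semilength_eq_length]
  omega

instance finite_semilength_and (n : ℕ) (P : DyckWord → Prop) :
    Finite {p : DyckWord // p.semilength = n ∧ P p} :=
  Finite.of_injective (fun p => (⟨p.1, p.2.1⟩ : {p : DyckWord // p.semilength = n}))
    fun _ _ h => Subtype.ext (by simpa using h)

section FirstReturn

variable (P Q : DyckWord → Prop) (n : ℕ)

def nestAdd : (Σ ij : antidiagonal n, {X : DyckWord // X.semilength = ij.1.1 ∧ P X} ×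
      {Y : DyckWord // Y.semilength = ij.1.2 ∧ Q Y}) →
    {p : DyckWord // p.semilength = n + 1 ∧ P p.insidePart ∧ Q p.outsidePart}
  | ⟨ij, X, Y⟩ => ⟨nest X + Y, by
      have := mem_antidiagonal.mp ij.2
      simp only [semilength_add, semilength_nest, X.2.1, Y.2.1]
      omega, by simpa using X.2.2, by simpa using Y.2.2⟩

lemma nestAdd_bijective : Function.Bijective (nestAdd P Q n) := by
  constructor
  · rintro ⟨⟨⟨i, j⟩, hij⟩, ⟨X, hX, _⟩, ⟨Y, hY, _⟩⟩
      ⟨⟨⟨i', j'⟩, hij'⟩, ⟨X', hX', _⟩, ⟨Y', hY', _⟩⟩ h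
    replace h : nest X + Y = nest X' + Y' := congrArg Subtype.val h
    obtain rfl : X = X' := by simpa using congrArg insidePart h
    obtain rfl : Y = Y' := by simpa using congrArg outsidePart h
    dsimp only at hX hY hX' hY'
    subst hX hY hX' hY'
    rfl
  · rintro ⟨p, hp, hP, hQ⟩
    have hp0 : p ≠ 0 := by rintro rfl; simp at hp
    refine ⟨⟨⟨(p.insidePart.semilength, p.outsidePart.semilength), ?_⟩,
      ⟨_, rfl, hP⟩, ⟨_, rfl, hQ⟩⟩, Subtype.ext (nest_insidePart_add_outsidePart hp0)⟩
    have := semilength_insidePart_add_semilength_outsidePart_add_one hp0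
    rw [HasAntidiagonal.mem_antidiagonal]
    omega

theorem card_semilength_succ_eq_sum :
    Nat.card {p : DyckWord // p.semilength = n + 1 ∧ P p.insidePart ∧ Q p.outsidePart} =
      ∑ ij ∈ antidiagonal n, Nat.card {X : DyckWord // X.semilength = ij.1 ∧ P X} *
        Nat.card {Y : DyckWord // Y.semilength = ij.2 ∧ Q Y} := by
  rw [← Nat.card_congr (Equiv.ofBijective _ (nestAdd_bijective P Q n)), Nat.card_sigma]
  simp only [Nat.card_prod]
  exact Finset.sum_coe_sort (antidiagonal n) fun ij =>
    Nat.card {X : DyckWord // X.semilength = ij.1 ∧ P X} *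
      Nat.card {Y : DyckWord // Y.semilength = ij.2 ∧ Q Y}

end FirstReturn

lemma card_semilength_and_ne_zero (n : ℕ) :
    Nat.card {p : DyckWord // p.semilength = n ∧ p ≠ 0} = if n = 0 then 0 else catalan n := by
  split_ifs with hn
  · subst hn
    simp [semilength_eq_zero_iff]
  · rw [← card_dyckWord_semilength_eq_catalan, ← Nat.card_eq_fintype_card]
    refine Nat.card_congr (Equiv.subtypeEquivRight fun p => ?_)
    rw [and_iff_left_iff_imp]
    rintro hp rfl
    exact hn hp.symm

lemma card_semilength_zero_and_isHillFree :
    Nat.card {p : DyckWord // p.semilength = 0 ∧ p.IsHillFree} = 1 := by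
  simp only [semilength_eq_zero_iff]
  rw [Nat.card_eq_one_iff_exists]
  exact ⟨⟨0, rfl, isHillFree_zero⟩, fun p => Subtype.ext p.2.1⟩

lemma card_semilength_succ_and_isHillFree (n : ℕ) :
    Nat.card {p : DyckWord // p.semilength = n + 1 ∧ p.IsHillFree} =
      ∑ ij ∈ antidiagonal n, Nat.card {X : DyckWord // X.semilength = ij.1 ∧ X ≠ 0} *
        Nat.card {Y : DyckWord // Y.semilength = ij.2 ∧ Y.IsHillFree} := by
  rw [← card_semilength_succ_eq_sum]
  refine Nat.card_congr (Equiv.subtypeEquivRight fun p => and_congr_right fun hp => ?_)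
  have hp0 : p ≠ 0 := by rintro rfl; simp at hp
  conv_lhs => rw [← nest_insidePart_add_outsidePart hp0]
  exact isHillFree_nest_add _ _

end DyckWord

lemma PowerSeries.mk_eq_one_add_X_mul_mk_mul_mk {R : Type*} [Semiring R] {f a b : ℕ → R}
    (h0 : f 0 = 1) (hsucc : ∀ n, f (n + 1) = ∑ ij ∈ antidiagonal n, a ij.1 * b ij.2) :
    mk f = 1 + X * (mk a * mk b) := by
  ext (_ | n)
  · simp [h0]
  · rw [map_add, coeff_succ_X_mul, coeff_mul]
    simp [hsucc]

/-- The Fine number generating function `F(t)` satisfies `F(t)·(1 + t·C(t)) = C(t)`,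
where `C(t)` is the Catalan generating function, which satisfies `C = 1 + t·C²`.
Fine numbers count Dyck paths with no hill, i.e. `F 2 0 1 n 0` in our encoding. -/
theorem fine_numbers_gf :
    (PowerSeries.mk (fun n => (catalan n : ℚ))) =
      1 + PowerSeries.X * (PowerSeries.mk (fun n => (catalan n : ℚ))) ^ 2 ∧
    PowerSeries.mk (fun n => (F 2 0 1 n 0 : ℚ)) *
        (1 + PowerSeries.X * PowerSeries.mk (fun n => (catalan n : ℚ))) =
      PowerSeries.mk (fun n => (catalan n : ℚ)) := by
  set C := PowerSeries.mk fun n => (catalan n : ℚ)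
  set Φ := PowerSeries.mk fun n => (F 2 0 1 n 0 : ℚ)
  have hC : C = 1 + X * (C * C) :=
    mk_eq_one_add_X_mul_mk_mul_mk (by simp) fun n => by simp [catalan_succ']
  have hNonzero : (mk fun n => (Nat.card {p : DyckWord // p.semilength = n ∧ p ≠ 0} : ℚ)) =
      C - 1 := by
    ext (_ | n) <;> simp [DyckWord.card_semilength_and_ne_zero, C]
  have hΦ : Φ = 1 + X * ((C - 1) * Φ) := by
    rw [← hNonzero]
    refine mk_eq_one_add_X_mul_mk_mul_mk ?_ fun n => ?_
    · simp [F_two_zero_one_eq_card, DyckWord.card_semilength_zero_and_isHillFree]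
    · simp [F_two_zero_one_eq_card, DyckWord.card_semilength_succ_and_isHillFree]
  exact ⟨by rw [sq]; exact hC, by linear_combination C * hΦ - Φ * hC⟩
end

section
/- Fix k ≥ 2. For every n ≥ 0, the number of k-ary trees with exactly n edges equals M^{k-1}_{n,0}(1⃗,1⃗), the number of order-(k-1) Motzkin paths of length n from (0,0) to (n,0) using steps U=(1,1) and D_i=(1,-i) for 0 ≤ i ≤ k-1 that stay weakly above y=0. -/
open Finset PowerSeries

/-- Rooted plane trees: a vertex together with an ordered (possibly empty) list of
subtrees. -/
inductive PTree : Type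
  | node : List PTree → PTree

namespace PTree

/-- The number of edges of a plane tree. -/
def edges : PTree → ℕ
  | node ts => (ts.attach.map fun t => edges t.1).sum + ts.length
  decreasing_by
    have := List.sizeOf_lt_of_mem t.2
    simp only [PTree.node.sizeOf_spec]
    omega

/-- Every vertex of the tree has at most `k` children. -/
def arityLE (k : ℕ) : PTree → Prop
  | node ts => ts.length ≤ k ∧ ∀ t ∈ ts.attach, arityLE k t.1
  decreasing_by
    have := List.sizeOf_lt_of_mem t.2
    simp only [PTree.node.sizeOf_spec]
    omega

/-- Every vertex of the tree has either exactly `k` children or a number of children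
lying in `S`. -/
def arityIn (k : ℕ) (S : Finset ℕ) : PTree → Prop
  | node ts => (ts.length = k ∨ ts.length ∈ S) ∧ ∀ t ∈ ts.attach, arityIn k S t.1
  decreasing_by
    have := List.sizeOf_lt_of_mem t.2
    simp only [PTree.node.sizeOf_spec]
    omega

end PTree

/-!
A tree whose root has children `t₀, t₁, …, t_d` (so `d ≤ k - 1`) is sent, recursively, to the
path `P(t₀) U P(t₁) ⋯ U P(t_d) D_d`, whose length is the number of edges. The map is inverted by
reading off the last step `D_d` and cutting the rest at the last up steps leaving the heights
`0, 1, …, d - 1`: this splits it as `Q U Q₁ ⋯ U Q_d` with excursions `Q, Q₁, …, Q_d`, and such a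
splitting is unique.
-/

theorem List.exists_map_eq_of_forall_mem {α β : Type*} {p : α → Prop} {f : α → β} {l : List β}
    (h : ∀ b ∈ l, ∃ a, p a ∧ f a = b) : ∃ as : List α, (∀ a ∈ as, p a) ∧ as.map f = l := by
  induction l with
  | nil => exact ⟨[], by simp, rfl⟩
  | cons b l ih =>
    obtain ⟨a, ha, rfl⟩ := h b (by simp)
    obtain ⟨as, has, rfl⟩ := ih fun b hb => h b (by simp [hb])
    exact ⟨a :: as, List.forall_mem_cons.2 ⟨ha, has⟩, rfl⟩

namespace Motzkin

def PrefixNonneg (L : List ℤ) : Prop := ∀ m, 0 ≤ (L.take m).sum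

def IsExcursion (L : List ℤ) : Prop := PrefixNonneg L ∧ L.sum = 0

def IsStep (ℓ : ℕ) (s : ℤ) : Prop := s = 1 ∨ ∃ d : ℕ, d ≤ ℓ ∧ s = -d

def IsPath (ℓ : ℕ) (L : List ℤ) : Prop := IsExcursion L ∧ ∀ s ∈ L, IsStep ℓ s

def upJoin (Qs : List (List ℤ)) : List ℤ := Qs.flatMap (1 :: ·)

variable {A B L Q Q' R R' : List ℤ} {Qs Qs' : List (List ℤ)}

theorem prefixNonneg_nil : PrefixNonneg [] := fun m => by simp

theorem PrefixNonneg.sum_nonneg (h : PrefixNonneg L) : 0 ≤ L.sum := by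
  simpa using h L.length

theorem prefixNonneg_append_iff :
    PrefixNonneg (A ++ B) ↔ PrefixNonneg A ∧ ∀ m, 0 ≤ A.sum + (B.take m).sum := by
  refine ⟨fun h => ⟨fun m => ?_, fun m => by
    simpa [List.take_append, List.take_of_length_le (Nat.le_add_right _ m)] using h (A.length + m)⟩,
    fun ⟨hA, hB⟩ m => ?_⟩
  · rcases le_total m A.length with hm | hm
    · simpa [List.take_append, Nat.sub_eq_zero_of_le hm] using h m
    · simpa [List.take_of_length_le hm] using h A.length
  · rw [List.take_append, List.sum_append]
    rcases le_total m A.length with hm | hm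
    · simpa [Nat.sub_eq_zero_of_le hm] using hA m
    · rw [List.take_of_length_le hm]
      exact hB _

theorem PrefixNonneg.append (hA : PrefixNonneg A) (hB : PrefixNonneg B) :
    PrefixNonneg (A ++ B) :=
  prefixNonneg_append_iff.2 ⟨hA, fun m => add_nonneg hA.sum_nonneg (hB m)⟩

theorem PrefixNonneg.append_singleton {x : ℤ} (hA : PrefixNonneg A) (hx : 0 ≤ A.sum + x) :
    PrefixNonneg (A ++ [x]) :=
  prefixNonneg_append_iff.2 ⟨hA, fun m => by cases m <;> simp [hA.sum_nonneg, hx]⟩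

theorem PrefixNonneg.one_cons (h : PrefixNonneg L) : PrefixNonneg (1 :: L) :=
  (prefixNonneg_nil.append_singleton (by simp)).append h

theorem prefixNonneg_iff_forall_lt :
    PrefixNonneg L ↔ ∀ i < L.length, 0 ≤ (L.take (i + 1)).sum := by
  refine ⟨fun h i _ => h (i + 1), fun h m => ?_⟩
  rcases L.eq_nil_or_concat with rfl | ⟨L', x, rfl⟩
  · simp
  rcases m with _ | i
  · simp
  have hmin : min (i + 1) (L'.concat x).length = min i L'.length + 1 := by simp
  rw [List.take_eq_take_min, hmin]
  exact h _ (by simp)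

@[simp] theorem upJoin_nil : upJoin [] = [] := rfl

@[simp] theorem upJoin_cons : upJoin (Q :: Qs) = 1 :: Q ++ upJoin Qs := rfl

theorem length_upJoin : (upJoin Qs).length = (Qs.map List.length).sum + Qs.length := by
  induction Qs with
  | nil => rfl
  | cons Q Qs ih =>
    simp only [upJoin_cons, List.cons_append, List.length_cons, List.length_append, ih,
      List.map_cons, List.sum_cons]
    omega

theorem sum_upJoin (h : ∀ Q ∈ Qs, Q.sum = 0) : (upJoin Qs).sum = Qs.length := by
  induction Qs with
  | nil => rfl
  | cons Q Qs ih =>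
    rw [List.forall_mem_cons] at h
    simp only [upJoin_cons, List.cons_append, List.sum_cons, List.sum_append, h.1, ih h.2,
      List.length_cons]
    push_cast
    ring

theorem prefixNonneg_upJoin (h : ∀ Q ∈ Qs, PrefixNonneg Q) : PrefixNonneg (upJoin Qs) := by
  induction Qs with
  | nil => exact prefixNonneg_nil
  | cons Q Qs ih => simp_all [PrefixNonneg.append, PrefixNonneg.one_cons]

theorem eq_one_or_mem_of_mem_upJoin {s : ℤ} (hs : s ∈ upJoin Qs) : s = 1 ∨ ∃ Q ∈ Qs, s ∈ Q := by
  obtain ⟨Q, hQ, rfl | hs⟩ : ∃ Q ∈ Qs, s = 1 ∨ s ∈ Q := by simpa [upJoin] using hs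
  exacts [Or.inl rfl, Or.inr ⟨Q, hQ, hs⟩]

theorem infix_append_upJoin_of_mem (hR : R ∈ Q :: Qs) : R <:+: Q ++ upJoin Qs := by
  rcases List.mem_cons.1 hR with rfl | hR
  · exact (List.prefix_append _ _).isInfix
  · have hmem : 1 :: R ∈ Qs.map (1 :: ·) := List.mem_map_of_mem hR
    exact (List.suffix_cons 1 R).isInfix |>.trans (List.infix_of_mem_flatten hmem)
      |>.trans (List.suffix_append _ _).isInfix

theorem exists_eq_append_one_cons (hL : PrefixNonneg L) (hup : ∀ s ∈ L, 0 < s → s = 1)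
    (hpos : 0 < L.sum) : ∃ Q R, IsExcursion Q ∧ PrefixNonneg R ∧ L = Q ++ 1 :: R := by
  induction L using List.reverseRecOn with
  | nil => simp at hpos
  | append_singleton L x ih =>
    have hL' := (prefixNonneg_append_iff.1 hL).1
    rw [List.sum_append, List.sum_singleton] at hpos
    rcases hL'.sum_nonneg.eq_or_lt with h0 | hlt
    · obtain rfl : x = 1 := hup x (by simp) (by omega)
      exact ⟨L, [], ⟨hL', h0.symm⟩, prefixNonneg_nil, rfl⟩
    · obtain ⟨Q, R, hQ, hR, rfl⟩ := ih hL' (fun s hs => hup s (by simp [hs])) hlt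
      refine ⟨Q, R ++ [x], hQ, hR.append_singleton ?_, by simp⟩
      simp only [List.sum_append, hQ.2, List.sum_cons, zero_add] at hpos
      omega

theorem exists_eq_append_upJoin {d : ℕ} (hL : PrefixNonneg L) (hup : ∀ s ∈ L, 0 < s → s = 1)
    (hsum : L.sum = d) : ∃ Q Qs, IsExcursion Q ∧ (∀ R ∈ Qs, IsExcursion R) ∧
      Qs.length = d ∧ L = Q ++ upJoin Qs := by
  induction d generalizing L with
  | zero => exact ⟨L, [], ⟨hL, hsum⟩, by simp, rfl, by simp⟩
  | succ d ih =>
    obtain ⟨Q, R, hQ, hR, rfl⟩ := exists_eq_append_one_cons hL hup (by omega)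
    have hRsum : R.sum = d := by
      simp only [List.sum_append, hQ.2, List.sum_cons, zero_add, Nat.cast_add, Nat.cast_one] at hsum
      omega
    obtain ⟨Q', Qs, hQ', hQs, rfl, rfl⟩ := ih hR (fun s hs => hup s (by simp [hs])) hRsum
    exact ⟨Q, Q' :: Qs, hQ, List.forall_mem_cons.2 ⟨hQ', hQs⟩, rfl, by simp⟩

theorem eq_nil_of_one_cons_eq {a : List ℤ} (ha : a.sum = 0) (hR : PrefixNonneg R)
    (h : 1 :: R = a ++ 1 :: R') : a = [] := by
  rcases a with _ | ⟨y, a⟩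
  · rfl
  · obtain ⟨rfl, rfl⟩ := List.cons_eq_cons.1 h
    have := (prefixNonneg_append_iff.1 hR).1.sum_nonneg
    rw [List.sum_cons] at ha
    omega

theorem eq_of_append_one_cons_eq (hQ : Q.sum = 0) (hQ' : Q'.sum = 0) (hR : PrefixNonneg R)
    (hR' : PrefixNonneg R') (h : Q ++ 1 :: R = Q' ++ 1 :: R') : Q = Q' ∧ R = R' := by
  rcases List.append_eq_append_iff.1 h with ⟨a, rfl, ha⟩ | ⟨a, rfl, ha⟩
  · obtain rfl := eq_nil_of_one_cons_eq (by simpa [hQ] using hQ') hR ha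
    simpa using ha
  · obtain rfl := eq_nil_of_one_cons_eq (by simpa [hQ'] using hQ) hR' ha
    simpa using ha.symm

theorem eq_of_append_upJoin_eq (hQ : Q.sum = 0) (hQ' : Q'.sum = 0)
    (hQs : ∀ R ∈ Qs, IsExcursion R) (hQs' : ∀ R ∈ Qs', IsExcursion R)
    (h : Q ++ upJoin Qs = Q' ++ upJoin Qs') : Q = Q' ∧ Qs = Qs' := by
  have hlen : Qs.length = Qs'.length := by
    have := congrArg List.sum h
    simp only [List.sum_append, hQ, hQ', sum_upJoin fun R hR => (hQs R hR).2,
      sum_upJoin fun R hR => (hQs' R hR).2] at this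
    omega
  induction Qs generalizing Q Q' Qs' with
  | nil =>
    obtain rfl := List.eq_nil_of_length_eq_zero hlen.symm
    simpa using h
  | cons q qs ih =>
    rcases Qs' with _ | ⟨q', qs'⟩
    · simp at hlen
    simp only [List.forall_mem_cons] at hQs hQs'
    have hT := hQs.1.1.append (prefixNonneg_upJoin fun R hR => (hQs.2 R hR).1)
    have hT' := hQs'.1.1.append (prefixNonneg_upJoin fun R hR => (hQs'.2 R hR).1)
    simp only [upJoin_cons, List.cons_append] at h
    obtain ⟨rfl, htail⟩ := eq_of_append_one_cons_eq hQ hQ' hT hT' h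
    obtain ⟨rfl, rfl⟩ := ih hQs.1.2 hQs'.1.2 hQs.2 hQs'.2 htail (by simpa using hlen)
    exact ⟨rfl, rfl⟩

end Motzkin

namespace PTree

open Motzkin

theorem edges_node (ts : List PTree) : (node ts).edges = (ts.map edges).sum + ts.length := by
  rw [edges, List.attach_map_val]

theorem arityLE_node {k : ℕ} {ts : List PTree} :
    (node ts).arityLE k ↔ ts.length ≤ k ∧ ∀ t ∈ ts, t.arityLE k := by
  rw [arityLE]
  exact and_congr_right fun _ => ⟨fun h t ht => h ⟨t, ht⟩ (List.mem_attach _ _),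
    fun h t _ => h t.1 t.2⟩

def toPath : PTree → List ℤ
  | node [] => []
  | node (t :: ts) => toPath t ++ upJoin (ts.map fun s => toPath s) ++ [-(ts.length : ℤ)]

@[simp] theorem toPath_node_nil : toPath (node []) = [] := by
  rw [toPath]

theorem toPath_node_cons (t : PTree) (ts : List PTree) :
    toPath (node (t :: ts)) = toPath t ++ upJoin (ts.map toPath) ++ [-(ts.length : ℤ)] := by
  rw [toPath]

theorem length_toPath (t : PTree) : (toPath t).length = t.edges := by
  induction t using toPath.induct with
  | case1 => simp [edges_node]
  | case2 t ts ih ihs =>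
    have hmap : (ts.map toPath).map List.length = ts.map edges := by
      simpa using List.map_congr_left ihs
    simp only [toPath_node_cons, List.length_append, ih, length_upJoin, hmap, List.length_map,
      edges_node, List.map_cons, List.sum_cons, List.length_cons, List.length_nil]
    omega

theorem isExcursion_toPath (t : PTree) : IsExcursion (toPath t) := by
  induction t using toPath.induct with
  | case1 => rw [toPath_node_nil]; exact ⟨prefixNonneg_nil, rfl⟩
  | case2 t ts ih ihs =>
    have hsum : (upJoin (ts.map toPath)).sum = ts.length := by
      simpa using sum_upJoin (Qs := ts.map toPath) (by simpa using fun s hs => (ihs s hs).2)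
    rw [toPath_node_cons]
    refine ⟨(ih.1.append (prefixNonneg_upJoin ?_)).append_singleton ?_, ?_⟩
    · simpa using fun s hs => (ihs s hs).1
    all_goals simp [ih.2, hsum]

theorem isStep_of_mem_toPath {ℓ : ℕ} {t : PTree} (ht : t.arityLE (ℓ + 1)) :
    ∀ s ∈ toPath t, IsStep ℓ s := by
  induction t using toPath.induct with
  | case1 => simp
  | case2 t ts ih ihs =>
    obtain ⟨hlen, hts⟩ := arityLE_node.1 ht
    rw [List.forall_mem_cons] at hts
    intro s hs
    simp only [toPath_node_cons, List.mem_append, List.mem_singleton] at hs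
    rcases hs with (hs | hs) | rfl
    · exact ih hts.1 s hs
    · rcases eq_one_or_mem_of_mem_upJoin hs with rfl | ⟨Q, hQ, hs⟩
      · exact Or.inl rfl
      · obtain ⟨u, hu, rfl⟩ := List.mem_map.1 hQ
        exact ihs u hu (hts.2 u hu) s hs
    · exact Or.inr ⟨ts.length, by simpa using hlen, rfl⟩

theorem toPath_injective : Function.Injective toPath := by
  intro t u h
  induction t using toPath.induct generalizing u with
  | case1 =>
    obtain ⟨_ | ⟨u, us⟩⟩ := u
    · rfl
    · simp [toPath_node_cons] at h
  | case2 t ts ih ihs =>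
    obtain ⟨_ | ⟨u, us⟩⟩ := u
    · simp [toPath_node_cons] at h
    rw [toPath_node_cons, toPath_node_cons] at h
    obtain ⟨h, -⟩ := List.append_inj' h rfl
    have hblocks {vs : List PTree} : ∀ R ∈ vs.map toPath, IsExcursion R := by
      simpa using fun v _ => isExcursion_toPath v
    obtain ⟨hroot, hkids⟩ := eq_of_append_upJoin_eq (isExcursion_toPath t).2
      (isExcursion_toPath u).2 hblocks hblocks h
    have hlen : ts.length = us.length := by simpa using congrArg List.length hkids
    have hts : ts = us := List.ext_getElem hlen fun i hi hi' =>
      ihs _ (List.getElem_mem hi) (by simpa [hi, hi'] using congrArg (·[i]?) hkids)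
    rw [ih hroot, hts]

theorem exists_toPath_eq {ℓ : ℕ} {L : List ℤ} (hL : IsPath ℓ L) :
    ∃ t, t.arityLE (ℓ + 1) ∧ toPath t = L := by
  induction hn : L.length using Nat.strong_induction_on generalizing L with
  | _ n ih =>
  obtain ⟨⟨hNN, hsum⟩, hsteps⟩ := hL
  rcases L.eq_nil_or_concat with rfl | ⟨L, x, rfl⟩
  · exact ⟨node [], by simp [arityLE_node], toPath_node_nil⟩
  rw [List.concat_eq_append] at *
  rw [List.sum_append, List.sum_singleton] at hsum
  have hNN' := (prefixNonneg_append_iff.1 hNN).1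
  obtain ⟨d, hd, rfl⟩ : ∃ d : ℕ, d ≤ ℓ ∧ x = -d := by
    rcases hsteps x (by simp) with rfl | hx
    · have := hNN'.sum_nonneg
      omega
    · exact hx
  have hup : ∀ s ∈ L, 0 < s → s = 1 := fun s hs hpos => by
    rcases hsteps s (by simp [hs]) with h | ⟨e, -, rfl⟩
    · exact h
    · omega
  obtain ⟨Q, Qs, hQ, hQs, rfl, rfl⟩ :=
    exists_eq_append_upJoin (d := d) hNN' hup (by omega)
  have hpath : ∀ R ∈ Q :: Qs, ∃ t, t.arityLE (ℓ + 1) ∧ toPath t = R := by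
    intro R hR
    have hinf := infix_append_upJoin_of_mem hR
    refine ih R.length ?_ ⟨List.forall_mem_cons.2 ⟨hQ, hQs⟩ R hR,
      fun s hs => hsteps s (List.mem_append_left _ (hinf.subset hs))⟩ rfl
    have := hinf.length_le
    rw [← hn, List.length_append, List.length_singleton]
    omega
  obtain ⟨_ | ⟨t, ts⟩, hts, hmap⟩ := List.exists_map_eq_of_forall_mem hpath
  · simp at hmap
  obtain ⟨rfl, rfl⟩ := List.cons_eq_cons.1 hmap
  refine ⟨node (t :: ts), arityLE_node.2 ⟨by simpa using hd, hts⟩, ?_⟩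
  simp [toPath_node_cons]

theorem image_toPath (ℓ n : ℕ) :
    toPath '' {t | t.edges = n ∧ t.arityLE (ℓ + 1)} = {L | L.length = n ∧ Motzkin.IsPath ℓ L} := by
  ext L
  constructor
  · rintro ⟨t, ⟨rfl, ht⟩, rfl⟩
    exact ⟨length_toPath t, isExcursion_toPath t, isStep_of_mem_toPath ht⟩
  · rintro ⟨rfl, hL⟩
    obtain ⟨t, ht, rfl⟩ := exists_toPath_eq hL
    exact ⟨t, ⟨(length_toPath t).symm, ht⟩, rfl⟩

end PTree

theorem motzkinStepOK_one_one_iff {ℓ : ℕ} {s : ℤ} {c : ℕ} {h : ℤ} :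
    MotzkinStepOK ℓ (fun _ => 1) (fun _ => 1) s c h ↔ c = 0 ∧ Motzkin.IsStep ℓ s := by
  simp only [MotzkinStepOK, Motzkin.IsStep, ite_self, Nat.lt_one_iff]
  grind

theorem mem_coloredMotzkinSet_one_one_iff {ℓ n : ℕ} {P : List (ℤ × ℕ)} :
    P ∈ ColoredMotzkinSet ℓ (fun _ => 1) (fun _ => 1) n 0 ↔
      P.length = n ∧ (∀ p ∈ P, p.2 = 0) ∧ Motzkin.IsPath ℓ (P.map Prod.fst) := by
  refine and_congr_right fun hn => ?_
  subst hn
  simp only [motzkinStepOK_one_one_iff, Motzkin.IsPath, Motzkin.IsExcursion,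
    Motzkin.prefixNonneg_iff_forall_lt, List.forall_mem_map, List.forall_mem_iff_getElem,
    List.length_map, List.map_take, Nat.cast_zero]
  simp +contextual only [List.getD_eq_getElem, forall_and]
  tauto

theorem coloredMotzkinSet_one_one_eq_image (ℓ n : ℕ) :
    ColoredMotzkinSet ℓ (fun _ => 1) (fun _ => 1) n 0 =
      List.map (·, 0) '' {L | L.length = n ∧ Motzkin.IsPath ℓ L} := by
  ext P
  rw [mem_coloredMotzkinSet_one_one_iff]
  constructor
  · rintro ⟨hn, hcol, hP⟩
    refine ⟨P.map Prod.fst, ⟨by simpa using hn, hP⟩, ?_⟩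
    rw [List.map_map]
    exact (List.map_congr_left (g := id) fun p hp => by simp [← hcol p hp]).trans P.map_id
  · rintro ⟨L, ⟨rfl, hL⟩, rfl⟩
    simpa [Function.comp_def] using hL

/-- `k`-ary trees with `n` edges are equinumerous with uncolored order-`(k-1)`
Motzkin paths of length `n` and height `0`. -/
theorem kary_trees_eq_motzkin (k : ℕ) (hk : 2 ≤ k) (n : ℕ) :
    Nat.card {t : PTree // t.edges = n ∧ t.arityLE k} =
      M (k - 1) (fun _ => 1) (fun _ => 1) n 0 := by
  obtain ⟨ℓ, rfl⟩ : ∃ ℓ, k = ℓ + 1 := ⟨k - 1, by omega⟩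
  rw [M, Nat.add_sub_cancel, coloredMotzkinSet_one_one_eq_image,
    Nat.card_image_of_injective (List.map_injective_iff.2 (Prod.mk_left_injective 0)),
    ← PTree.image_toPath, Nat.card_image_of_injective PTree.toPath_injective]
  rfl
end
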